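/- arXiv:1405.5183 — 8 statements merged into one kernel-verified Lean document; each statement's English description precedes it below -/
import Mathlib

section
/- Let A_1, A_2, …, A_k be nonempty, convex, closed subsets of a real Hilbert space H. Then for every r > 0 the set F_r = {α ∈ [0,1] : the composition P_{A_k}^α ∘ P_{A_{k−1}}^α ∘ ⋯ ∘ P_{A_1}^α has a fixed point x satisfying ‖x‖ ≤ r} is closed in [0,1]. -/
/-!
Write `T_β = P_{A_k}^β ∘ ⋯ ∘ P_{A_1}^β`. If `αₙ → α` and `xₙ = T_{αₙ} xₙ` with `‖xₙ‖ ≤ r`,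
then `(xₙ)` is a bounded sequence of approximate fixed points of the nonexpansive map `T_α`,
because `β ↦ T_β x` is Lipschitz uniformly for `x` in a ball. Banach–Alaoglu and the Riesz
representation give a weak cluster point `w` of `(xₙ)` in the ball, and expanding
`‖xₙ - T_α w‖² ≤ (‖xₙ - T_α xₙ‖ + ‖xₙ - w‖)²` around `w` shows `T_α w = w`
(demiclosedness of `I - T_α`).
-/

/-- `P` is the metric projection onto `A`: for every `x`, `P x` belongs to `A` and
is a point of `A` nearest to `x`. -/
def IsMetricProj {H : Type*} [NormedAddCommGroup H] (A : Set H) (P : H → H) : Prop :=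
  ∀ x, P x ∈ A ∧ ∀ y ∈ A, dist x (P x) ≤ dist x y

/-- The `α`-relaxed version of a map `P`: `x ↦ α • P x + (1 - α) • x`. -/
def relax {H : Type*} [AddCommGroup H] [Module ℝ H] (α : ℝ) (P : H → H) : H → H :=
  fun x => α • P x + (1 - α) • x

/-- The composition `T (k-1) ∘ ⋯ ∘ T 1 ∘ T 0` (so `T 0` is applied first). -/
def compFold {H : Type*} {k : ℕ} (T : Fin k → H → H) : H → H :=
  (List.ofFn T).foldl (fun g f => f ∘ g) id

open Filter Topology InnerProductSpace Set

section compFold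

variable {X : Type*}

theorem foldl_comp_eq_comp (L : List (X → X)) (g : X → X) :
    L.foldl (fun g f ↦ f ∘ g) g = L.foldl (fun g f ↦ f ∘ g) id ∘ g := by
  induction L generalizing g with
  | nil => rfl
  | cons f L ih => simp only [List.foldl_cons, ih (f ∘ g), ih (f ∘ id)]; rfl

theorem compFold_succ {k : ℕ} (T : Fin (k + 1) → X → X) :
    compFold T = compFold (fun i ↦ T i.succ) ∘ T 0 := by
  rw [compFold, List.ofFn_succ, List.foldl_cons, foldl_comp_eq_comp]
  rfl

end compFold

section Normed

variable {E : Type*} [SeminormedAddCommGroup E]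

theorem LipschitzWith.norm_apply_le {f : E → E} (hf : LipschitzWith 1 f) (y : E) :
    ‖f y‖ ≤ ‖f 0‖ + ‖y‖ :=
  calc ‖f y‖ ≤ ‖f 0‖ + ‖f y - f 0‖ := norm_le_insert' _ _
    _ ≤ ‖f 0‖ + ‖y‖ := by simpa using hf.norm_sub_le y 0

theorem LipschitzWith.compFold {k : ℕ} {T : Fin k → E → E} (hT : ∀ i, LipschitzWith 1 (T i)) :
    LipschitzWith 1 (compFold T) := by
  induction k with
  | zero => exact LipschitzWith.id
  | succ k ih =>
    rw [compFold_succ]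
    simpa using (ih fun i ↦ hT i.succ).comp (hT 0)

theorem norm_compFold_sub_compFold_le {k : ℕ} {T S : Fin k → E → E} {C R δ : ℝ}
    (hT : ∀ i, LipschitzWith 1 (T i)) (hS : ∀ i y, ‖S i y‖ ≤ ‖y‖ + C)
    (hTS : ∀ i y, ‖y‖ ≤ R → ‖T i y - S i y‖ ≤ δ) {x : E} (hx : ‖x‖ + k * C ≤ R) :
    ‖compFold T x - compFold S x‖ ≤ k * δ := by
  induction k generalizing x with
  | zero => simp [compFold]
  | succ k ih =>
    have hC : 0 ≤ C := by simpa using (norm_nonneg _).trans (hS 0 0)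
    have hxR : ‖x‖ ≤ R := by nlinarith
    have hSx : ‖S 0 x‖ + k * C ≤ R := by push_cast at hx; linarith [hS 0 x]
    have htail := ih (fun i ↦ hT i.succ) (fun i ↦ hS i.succ) (fun i ↦ hTS i.succ) hSx
    have hhead := (LipschitzWith.compFold fun i ↦ hT i.succ).norm_sub_le (T 0 x) (S 0 x)
    simp only [compFold_succ, Function.comp_apply]
    calc _ ≤ ‖compFold (fun i ↦ T i.succ) (T 0 x) - compFold (fun i ↦ T i.succ) (S 0 x)‖
          + ‖compFold (fun i ↦ T i.succ) (S 0 x) - compFold (fun i ↦ S i.succ) (S 0 x)‖ :=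
          norm_sub_le_norm_sub_add_norm_sub _ _ _
      _ ≤ δ + k * δ := by
          simp only [NNReal.coe_one, one_mul] at hhead
          linarith [hTS 0 x hxR]
      _ = (k + 1 : ℕ) * δ := by push_cast; ring

end Normed

section relax

variable {E : Type*} [SeminormedAddCommGroup E] [NormedSpace ℝ E]

theorem relax_sub_relax (α β : ℝ) (P : E → E) (y : E) :
    relax α P y - relax β P y = (α - β) • (P y - y) := by
  simp only [relax]
  module

theorem LipschitzWith.relax {P : E → E} (hP : LipschitzWith 1 P) {α : ℝ} (hα : α ∈ Icc 0 1) :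
    LipschitzWith 1 (relax α P) := by
  refine lipschitzWith_iff_norm_sub_le.mpr fun x y ↦ ?_
  have hPxy := hP.norm_sub_le x y
  simp only [NNReal.coe_one, one_mul] at hPxy ⊢
  calc ‖_root_.relax α P x - _root_.relax α P y‖ = ‖α • (P x - P y) + (1 - α) • (x - y)‖ := by
        simp only [_root_.relax]; congr 1; module
    _ ≤ α * ‖P x - P y‖ + (1 - α) * ‖x - y‖ := by
        refine (norm_add_le _ _).trans_eq ?_
        rw [norm_smul, norm_smul, Real.norm_of_nonneg hα.1,
          Real.norm_of_nonneg (sub_nonneg.mpr hα.2)]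
    _ ≤ ‖x - y‖ := by nlinarith [hα.1]

theorem exists_norm_compFold_relax_sub_le {k : ℕ} {P : Fin k → E → E}
    (hP : ∀ i, LipschitzWith 1 (P i)) (r : ℝ) :
    ∃ K, ∀ α ∈ Icc (0 : ℝ) 1, ∀ β ∈ Icc (0 : ℝ) 1, ∀ x, ‖x‖ ≤ r →
      ‖compFold (fun i ↦ relax α (P i)) x - compFold (fun i ↦ relax β (P i)) x‖ ≤ K * |α - β| := by
  set C := ∑ i, ‖P i 0‖
  have hC : ∀ i, ‖P i 0‖ ≤ C :=
    fun i ↦ Finset.single_le_sum (f := fun j ↦ ‖P j 0‖) (fun _ _ ↦ norm_nonneg _)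
      (Finset.mem_univ i)
  -- the intermediate iterates of a point of norm `≤ r` have norm `≤ R`
  set R := r + k * C
  refine ⟨k * (C + 2 * R), fun α hα β hβ x hx ↦ ?_⟩
  have hgrowth : ∀ i y, ‖relax β (P i) y‖ ≤ ‖y‖ + C := by
    intro i y
    have h0 : ‖relax β (P i) 0‖ ≤ C := by
      simpa [_root_.relax, norm_smul, abs_of_nonneg hβ.1]
        using (mul_le_of_le_one_left (norm_nonneg _) hβ.2).trans (hC i)
    linarith [((hP i).relax hβ).norm_apply_le y]
  have hdiff : ∀ i y, ‖y‖ ≤ R → ‖relax α (P i) y - relax β (P i) y‖ ≤ |α - β| * (C + 2 * R) := by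
    intro i y hy
    rw [relax_sub_relax, norm_smul, Real.norm_eq_abs]
    gcongr
    linarith [norm_sub_le (P i y) y, (hP i).norm_apply_le y, hC i]
  calc _ ≤ k * (|α - β| * (C + 2 * R)) :=
        norm_compFold_sub_compFold_le (fun i ↦ (hP i).relax hα) hgrowth hdiff (by linarith)
    _ = k * (C + 2 * R) * |α - β| := by ring

end relax

section Hilbert

variable {H : Type*} [NormedAddCommGroup H] [InnerProductSpace ℝ H]

theorem IsMetricProj.inner_sub_le_zero {A : Set H} {P : H → H} (hA : Convex ℝ A)
    (hP : IsMetricProj A P) (x : H) {w : H} (hw : w ∈ A) : ⟪x - P x, w - P x⟫_ℝ ≤ 0 := by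
  have : Nonempty A := ⟨⟨w, hw⟩⟩
  refine (norm_eq_iInf_iff_real_inner_le_zero hA (hP x).1).mp ?_ w hw
  refine le_antisymm (le_ciInf fun a ↦ ?_) (ciInf_le (⟨0, ?_⟩ : BddBelow _) (⟨P x, (hP x).1⟩ : A))
  · simpa [dist_eq_norm] using (hP x).2 a a.2
  · rintro _ ⟨a, rfl⟩
    exact norm_nonneg _

theorem IsMetricProj.lipschitzWith_one {A : Set H} {P : H → H} (hA : Convex ℝ A)
    (hP : IsMetricProj A P) : LipschitzWith 1 P := by
  refine lipschitzWith_iff_norm_sub_le.mpr fun x y ↦ ?_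
  have hx := hP.inner_sub_le_zero hA x (hP y).1
  have hy := hP.inner_sub_le_zero hA y (hP x).1
  have hfirm : ‖P x - P y‖ ^ 2 ≤ ⟪x - y, P x - P y⟫_ℝ := by
    have : ⟪x - y, P x - P y⟫_ℝ
        = ‖P x - P y‖ ^ 2 - ⟪x - P x, P y - P x⟫_ℝ - ⟪y - P y, P x - P y⟫_ℝ := by
      rw [← real_inner_self_eq_norm_sq]
      simp only [inner_sub_left, inner_sub_right, real_inner_comm]
      ring
    linarith
  have hcs := real_inner_le_norm (x - y) (P x - P y)
  simp only [NNReal.coe_one, one_mul]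
  nlinarith [norm_nonneg (P x - P y), norm_nonneg (x - y)]

theorem exists_norm_le_tendsto_inner [CompleteSpace H] {ι : Type*} (U : Ultrafilter ι)
    {x : ι → H} {r : ℝ} (hx : ∀ i, ‖x i‖ ≤ r) :
    ∃ w : H, ‖w‖ ≤ r ∧ ∀ v, Tendsto (fun i ↦ ⟪x i, v⟫_ℝ) U (𝓝 ⟪w, v⟫_ℝ) := by
  let f : ι → WeakDual ℝ H := fun i ↦ StrongDual.toWeakDual (toDual ℝ H (x i))
  have hf : (U.map f : Filter (WeakDual ℝ H))
      ≤ 𝓟 (WeakDual.toStrongDual ⁻¹' Metric.closedBall 0 r) := by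
    rw [Ultrafilter.coe_map, le_principal_iff, mem_map]
    exact univ_mem' fun i ↦ by simpa [f] using hx i
  obtain ⟨φ, hφr, hφ⟩ := (WeakDual.isCompact_closedBall 0 r).ultrafilter_le_nhds _ hf
  refine ⟨(toDual ℝ H).symm (WeakDual.toStrongDual φ), by simpa using hφr, fun v ↦ ?_⟩
  rw [toDual_symm_apply]
  exact tendsto_iff_forall_eval_tendsto_topDualPairing.mp hφ v

theorem exists_fixedPoint_norm_le_of_tendsto_sub [CompleteSpace H] {T : H → H}
    (hT : LipschitzWith 1 T) {ι : Type*} {l : Filter ι} [l.NeBot] {x : ι → H} {r : ℝ}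
    (hx : ∀ i, ‖x i‖ ≤ r) (happrox : Tendsto (fun i ↦ x i - T (x i)) l (𝓝 0)) :
    ∃ z, T z = z ∧ ‖z‖ ≤ r := by
  let U := Ultrafilter.of l
  obtain ⟨w, hwr, hw⟩ := exists_norm_le_tendsto_inner U hx
  refine ⟨w, ?_, hwr⟩
  set e : ι → ℝ := fun i ↦ ‖x i - T (x i)‖
  have hsq_le : ∀ i, ‖w - T w‖ ^ 2 ≤ e i * (e i + 2 * (r + ‖w‖)) - 2 * ⟪x i - w, w - T w⟫_ℝ := by
    intro i
    have htri : ‖x i - T w‖ ≤ e i + ‖x i - w‖ := by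
      calc ‖x i - T w‖ ≤ ‖x i - T (x i)‖ + ‖T (x i) - T w‖ :=
            norm_sub_le_norm_sub_add_norm_sub _ _ _
        _ ≤ e i + ‖x i - w‖ := add_le_add le_rfl (by simpa using hT.norm_sub_le (x i) w)
    have hexp : ‖x i - T w‖ ^ 2 = ‖x i - w‖ ^ 2 + 2 * ⟪x i - w, w - T w⟫_ℝ + ‖w - T w‖ ^ 2 := by
      rw [← norm_add_sq_real]; abel_nf
    have hbd : ‖x i - w‖ ≤ r + ‖w‖ := (norm_sub_le _ _).trans (by linarith [hx i])
    have he : 0 ≤ e i := norm_nonneg _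
    nlinarith [norm_nonneg (x i - T w), norm_nonneg (x i - w)]
  have he : Tendsto e U (𝓝 0) := by simpa using (happrox.mono_left (Ultrafilter.of_le l)).norm
  have hinner : Tendsto (fun i ↦ ⟪x i - w, w - T w⟫_ℝ) U (𝓝 0) := by
    simpa [inner_sub_left] using (hw (w - T w)).sub_const ⟪w, w - T w⟫_ℝ
  have hlim : Tendsto (fun i ↦ e i * (e i + 2 * (r + ‖w‖)) - 2 * ⟪x i - w, w - T w⟫_ℝ) U (𝓝 0) := by
    simpa using (he.mul (he.add_const _)).sub (hinner.const_mul 2)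
  have : ‖w - T w‖ ^ 2 ≤ 0 := ge_of_tendsto hlim (Eventually.of_forall hsq_le)
  exact (sub_eq_zero.mp (by simpa using this)).symm

end Hilbert

theorem stmt_2_general {H : Type*} [NormedAddCommGroup H] [InnerProductSpace ℝ H] [CompleteSpace H]
    (k : ℕ) (A : Fin k → Set H)
    (hA : ∀ i, (A i).Nonempty ∧ Convex ℝ (A i) ∧ IsClosed (A i))
    (P : Fin k → H → H) (hP : ∀ i, IsMetricProj (A i) (P i))
    (r : ℝ) :
    IsClosed {α : ℝ | α ∈ Set.Icc (0 : ℝ) 1 ∧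
      ∃ x, compFold (fun i => relax α (P i)) x = x ∧ ‖x‖ ≤ r} := by
  refine IsSeqClosed.isClosed fun αs α hmem hlim ↦ ?_
  have hα : α ∈ Icc (0 : ℝ) 1 :=
    isClosed_Icc.mem_of_tendsto hlim (Eventually.of_forall fun n ↦ (hmem n).1)
  choose xs hfix hxr using fun n ↦ (hmem n).2
  have hPlip : ∀ i, LipschitzWith 1 (P i) := fun i ↦ (hP i).lipschitzWith_one (hA i).2.1
  obtain ⟨K, hK⟩ := exists_norm_compFold_relax_sub_le hPlip r
  have happrox : Tendsto (fun n ↦ xs n - compFold (fun i ↦ relax α (P i)) (xs n)) atTop (𝓝 0) := by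
    refine squeeze_zero_norm (fun n ↦ ?_) (by simpa using ((hlim.sub_const α).abs.const_mul K))
    calc _ = ‖compFold (fun i ↦ relax (αs n) (P i)) (xs n)
          - compFold (fun i ↦ relax α (P i)) (xs n)‖ := by rw [hfix n]
      _ ≤ K * |αs n - α| := hK _ (hmem n).1 _ hα _ (hxr n)
  exact ⟨hα, exists_fixedPoint_norm_le_of_tendsto_sub
    (LipschitzWith.compFold fun i ↦ (hPlip i).relax hα) hxr happrox⟩

theorem stmt_2 {H : Type*} [NormedAddCommGroup H] [InnerProductSpace ℝ H] [CompleteSpace H]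
    (k : ℕ) (hk : 1 ≤ k) (A : Fin k → Set H)
    (hA : ∀ i, (A i).Nonempty ∧ Convex ℝ (A i) ∧ IsClosed (A i))
    (P : Fin k → H → H) (hP : ∀ i, IsMetricProj (A i) (P i))
    (r : ℝ) (hr : 0 < r) :
    IsClosed {α : ℝ | α ∈ Set.Icc (0 : ℝ) 1 ∧
      ∃ x, compFold (fun i => relax α (P i)) x = x ∧ ‖x‖ ≤ r} :=
  stmt_2_general k A hA P hP r
end

section
/- Let α, β ∈ (0,1] and let u ∈ ℝ² be a fixed point of P_{B_3}^α ∘ P_{B_2}^α ∘ P_{B_1}^β. Then P_{B_1}(u) = (x, x²) for some x ∈ [0,1], and this x satisfies 2x³ + x = (1−α)/(2−α). -/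
/-!
The maps `P₂` and `P₃` are constant, so with `v = P₁ u` and `s = 1 - (1 - α)² (1 - β)` the
fixed-point equation is the affine relation `s (u - v) = α (1 - α) e₀ - α (2 - α) v`. On the other
hand `u - v` lies in the normal cone of the convex set `B₁` at `v`: its second coordinate vanishes
unless `v` is on the parabola, and its first coordinate is `-2 v₀` times its second. Multiplying
these two facts by `s` gives `v₁ = v₀²` and `α (2 - α) (2 v₀³ + v₀) = α (1 - α)`.
-/

open scoped InnerProductSpace

theorem IsMetricProj.inner_sub_nonpos {F : Type*} [NormedAddCommGroup F] [InnerProductSpace ℝ F]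
    {K : Set F} {P : F → F} (hK : Convex ℝ K) (hP : IsMetricProj K P) (x : F) :
    ∀ w ∈ K, ⟪x - P x, w - P x⟫_ℝ ≤ 0 := by
  have : Nonempty K := ⟨⟨P x, (hP x).1⟩⟩
  refine (norm_eq_iInf_iff_real_inner_le_zero hK (hP x).1).1 <|
    le_antisymm (le_ciInf fun w => ?_)
      (ciInf_le (f := fun w : K => ‖x - w‖) ⟨0, ?_⟩ ⟨P x, (hP x).1⟩)
  · simpa only [dist_eq_norm] using (hP x).2 w w.2
  · rintro _ ⟨w, rfl⟩
    positivity

theorem convex_setOf_sq_le : Convex ℝ {p : EuclideanSpace ℝ (Fin 2) | p 0 ^ 2 ≤ p 1} := by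
  intro p hp q hq a b ha hb hab
  simp only [Set.mem_ofPred_eq, PiLp.add_apply, PiLp.smul_apply, smul_eq_mul] at *
  obtain rfl : b = 1 - a := by linarith
  nlinarith [mul_nonneg ha hb, sq_nonneg (p 0 - q 0)]

theorem EuclideanSpace.inner_fin_two (p q : EuclideanSpace ℝ (Fin 2)) :
    ⟪p, q⟫_ℝ = p 0 * q 0 + p 1 * q 1 := by
  simp [PiLp.inner_apply, Fin.sum_univ_two, mul_comm]

theorem eq_zero_of_forall_mul_add_mul_sq_nonpos {b c : ℝ} (h : ∀ t, b * t + c * t ^ 2 ≤ 0) :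
    b = 0 := by
  have hk : 0 < |c| + 1 := by positivity
  have := h (b / (|c| + 1))
  field_simp at this
  nlinarith [neg_abs_le c, sq_nonneg b]

theorem IsMetricProj.sub_apply_normal_sq_le
    {P : EuclideanSpace ℝ (Fin 2) → EuclideanSpace ℝ (Fin 2)} (hP : IsMetricProj {p | p 0 ^ 2 ≤ p 1} P) (x : EuclideanSpace ℝ (Fin 2)) :
    (x 1 - P x 1) * (P x 1 - P x 0 ^ 2) = 0 ∧ x 0 - P x 0 + 2 * P x 0 * (x 1 - P x 1) = 0 := by
  set v := P x
  have hv : v 0 ^ 2 ≤ v 1 := (hP x).1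
  have hinner (a b : ℝ) (hab : a ^ 2 ≤ b) :
      (x 0 - v 0) * (a - v 0) + (x 1 - v 1) * (b - v 1) ≤ 0 := by
    have := hP.inner_sub_nonpos convex_setOf_sq_le x !₂[a, b] (by simpa using hab)
    simpa [EuclideanSpace.inner_fin_two] using this
  have hup := hinner (v 0) (v 1 + 1) (by linarith)
  have hdown := hinner (v 0) (v 0 ^ 2) le_rfl
  have hcompl : (x 1 - v 1) * (v 1 - v 0 ^ 2) = 0 := by nlinarith
  refine ⟨hcompl, eq_zero_of_forall_mul_add_mul_sq_nonpos (c := x 1 - v 1) fun t => ?_⟩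
  linear_combination hinner (v 0 + t) ((v 0 + t) ^ 2) le_rfl + hcompl

theorem sub_proj_eq_of_relax_fixed {P₁ P₂ P₃ : EuclideanSpace ℝ (Fin 2) → EuclideanSpace ℝ (Fin 2)}
    (hP₂ : IsMetricProj {p | p 0 = 1 ∧ p 1 = 0} P₂) (hP₃ : IsMetricProj {p | p 0 = 0 ∧ p 1 = 0} P₃)
    {α β : ℝ} {u : EuclideanSpace ℝ (Fin 2)} (hu : relax α P₃ (relax α P₂ (relax β P₁ u)) = u) :
    (1 - (1 - α) ^ 2 * (1 - β)) * (u 0 - P₁ u 0) = α * (1 - α) - α * (2 - α) * P₁ u 0 ∧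
      (1 - (1 - α) ^ 2 * (1 - β)) * (u 1 - P₁ u 1) = -(α * (2 - α) * P₁ u 1) := by
  obtain ⟨h2₀, h2₁⟩ := (hP₂ (relax β P₁ u)).1
  obtain ⟨h3₀, h3₁⟩ := (hP₃ (relax α P₂ (relax β P₁ u))).1
  have hu₀ := congrArg (· 0) hu
  have hu₁ := congrArg (· 1) hu
  simp only [relax, PiLp.add_apply, PiLp.smul_apply, smul_eq_mul] at hu₀ hu₁ h2₀ h2₁ h3₀ h3₁
  rw [h3₀, h2₀] at hu₀
  rw [h3₁, h2₁] at hu₁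
  exact ⟨by linear_combination -hu₀, by linear_combination -hu₁⟩

theorem mem_Icc_of_two_sub_mul_eq {α x : ℝ} (hα : α ≤ 1)
    (h : (2 - α) * (2 * x ^ 3 + x) = 1 - α) : x ∈ Set.Icc 0 1 := by
  have hx0 : 0 ≤ x := by
    by_contra! hx
    nlinarith [mul_nonpos_of_nonpos_of_nonneg hx.le (sq_nonneg x)]
  exact ⟨hx0, by nlinarith [mul_nonneg (by linarith : (0 : ℝ) ≤ 2 - α) (pow_nonneg hx0 3)]⟩

theorem stmt_6_general
    (B₁ B₂ B₃ : Set (EuclideanSpace ℝ (Fin 2)))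
    (hB₁ : B₁ = {p | (p 0) ^ 2 ≤ p 1})
    (hB₂ : B₂ = {p | p 0 = 1 ∧ p 1 = 0})
    (hB₃ : B₃ = {p | p 0 = 0 ∧ p 1 = 0})
    (P₁ P₂ P₃ : EuclideanSpace ℝ (Fin 2) → EuclideanSpace ℝ (Fin 2))
    (hP₁ : IsMetricProj B₁ P₁) (hP₂ : IsMetricProj B₂ P₂) (hP₃ : IsMetricProj B₃ P₃)
    (α β : ℝ) (hα : α ∈ Set.Ioc (0 : ℝ) 1)
    (u : EuclideanSpace ℝ (Fin 2)) (hu : relax α P₃ (relax α P₂ (relax β P₁ u)) = u) :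
    ∃ x ∈ Set.Icc (0 : ℝ) 1, P₁ u 0 = x ∧ P₁ u 1 = x ^ 2 ∧
      2 * x ^ 3 + x = (1 - α) / (2 - α) := by
  subst hB₁ hB₂ hB₃
  obtain ⟨hα0, hα1⟩ := hα
  have hc : α * (2 - α) ≠ 0 := mul_ne_zero hα0.ne' (by linarith)
  obtain ⟨hcompl, hnormal⟩ := hP₁.sub_apply_normal_sq_le u
  obtain ⟨hd₀, hd₁⟩ := sub_proj_eq_of_relax_fixed hP₂ hP₃ hu
  set v := P₁ u
  set s := 1 - (1 - α) ^ 2 * (1 - β)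
  have hv : v 0 ^ 2 ≤ v 1 := (hP₁ u).1
  have hpar : v 1 = v 0 ^ 2 := by
    have : α * (2 - α) * (v 1 * (v 1 - v 0 ^ 2)) = 0 := by
      linear_combination (v 1 - v 0 ^ 2) * hd₁ - s * hcompl
    have hv1 : v 1 * (v 1 - v 0 ^ 2) = 0 := (mul_eq_zero.1 this).resolve_left hc
    nlinarith [sq_nonneg (v 0)]
  have hcubic : (2 - α) * (2 * v 0 ^ 3 + v 0) = 1 - α := by
    apply mul_left_cancel₀ hα0.ne'
    linear_combination hd₀ + 2 * v 0 * hd₁ - s * hnormal - 2 * α * (2 - α) * v 0 * hpar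
  refine ⟨v 0, mem_Icc_of_two_sub_mul_eq hα1 hcubic, rfl, hpar, ?_⟩
  rw [eq_div_iff (by linarith)]
  linarith

theorem stmt_6
    (B₁ B₂ B₃ : Set (EuclideanSpace ℝ (Fin 2)))
    (hB₁ : B₁ = {p | (p 0) ^ 2 ≤ p 1})
    (hB₂ : B₂ = {p | p 0 = 1 ∧ p 1 = 0})
    (hB₃ : B₃ = {p | p 0 = 0 ∧ p 1 = 0})
    (P₁ P₂ P₃ : EuclideanSpace ℝ (Fin 2) → EuclideanSpace ℝ (Fin 2))
    (hP₁ : IsMetricProj B₁ P₁) (hP₂ : IsMetricProj B₂ P₂) (hP₃ : IsMetricProj B₃ P₃)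
    (α β : ℝ) (hα : α ∈ Set.Ioc (0 : ℝ) 1) (hβ : β ∈ Set.Ioc (0 : ℝ) 1)
    (u : EuclideanSpace ℝ (Fin 2)) (hu : relax α P₃ (relax α P₂ (relax β P₁ u)) = u) :
    ∃ x ∈ Set.Icc (0 : ℝ) 1, P₁ u 0 = x ∧ P₁ u 1 = x ^ 2 ∧
      2 * x ^ 3 + x = (1 - α) / (2 - α) :=
  stmt_6_general B₁ B₂ B₃ hB₁ hB₂ hB₃ P₁ P₂ P₃ hP₁ hP₂ hP₃ α β hα u hu
end

section
/- Let A be a nonempty, convex, closed subset of a real Hilbert space H and let α, β ∈ [0,1]. Then P_A^α ∘ P_A^β = P_A^{1−(1−α)(1−β)}. Consequently, for every integer m ≥ 1, the m-fold composition (P_A^α)^m equals P_A^{1−(1−α)^m}. -/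
section StrictlyConvex

variable {E : Type*} [NormedAddCommGroup E] [NormedSpace ℝ E]

-- Two distinct nearest points would have a strictly nearer midpoint, by strict convexity.
theorem Convex.eq_of_forall_dist_le [StrictConvexSpace ℝ E] {A : Set E} (hA : Convex ℝ A)
    {u v w : E} (hv : v ∈ A) (hw : w ∈ A) (hv_min : ∀ y ∈ A, dist u v ≤ dist u y)
    (hw_min : ∀ y ∈ A, dist u w ≤ dist u y) : v = w := by
  have hvw : dist u v = dist u w := le_antisymm (hv_min w hw) (hw_min v hv)
  by_contra hne
  have hlt : ‖(1 / 2 : ℝ) • ((u - v) + (u - w))‖ < ‖u - v‖ :=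
    (norm_midpoint_lt_iff (by simpa [dist_eq_norm] using hvw)).2 (by simpa using hne)
  have hmid : (1 / 2 : ℝ) • ((u - v) + (u - w)) = u - midpoint ℝ v w := by
    rw [midpoint_eq_smul_add, invOf_eq_inv]
    module
  have hle := hv_min _ (hA.midpoint_mem hv hw)
  rw [dist_eq_norm, dist_eq_norm, ← hmid] at hle
  exact hle.not_gt hlt

theorem relax_mem_segment (P : E → E) {β : ℝ} (hβ : β ∈ Set.Icc (0 : ℝ) 1) (x : E) :
    relax β P x ∈ segment ℝ x (P x) :=
  ⟨1 - β, β, by linarith [hβ.2], hβ.1, by ring, add_comm _ _⟩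

namespace IsMetricProj

variable {A : Set E} {P : E → E}

theorem apply_eq_of_forall_dist_le [StrictConvexSpace ℝ E] (hA : Convex ℝ A)
    (hP : IsMetricProj A P) {u v : E} (hv : v ∈ A) (hv_min : ∀ y ∈ A, dist u v ≤ dist u y) :
    P u = v :=
  hA.eq_of_forall_dist_le (hP u).1 hv (hP u).2 hv_min

theorem apply_of_mem_segment [StrictConvexSpace ℝ E] (hA : Convex ℝ A) (hP : IsMetricProj A P)
    {x z : E} (hz : z ∈ segment ℝ x (P x)) : P z = P x := by
  refine hP.apply_eq_of_forall_dist_le hA (hP x).1 fun y hy => ?_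
  have hsplit := dist_add_dist_of_mem_segment hz
  have hx_min := (hP x).2 y hy
  have htri := dist_triangle x z y
  linarith

theorem relax_comp_relax [StrictConvexSpace ℝ E] (hA : Convex ℝ A) (hP : IsMetricProj A P)
    (α : ℝ) {β : ℝ} (hβ : β ∈ Set.Icc (0 : ℝ) 1) :
    relax α P ∘ relax β P = relax (1 - (1 - α) * (1 - β)) P := by
  funext x
  have hPz : P (relax β P x) = P x := hP.apply_of_mem_segment hA (relax_mem_segment P hβ x)
  simp only [Function.comp_apply, relax] at hPz ⊢
  rw [hPz]
  module

theorem iterate_relax [StrictConvexSpace ℝ E] (hA : Convex ℝ A) (hP : IsMetricProj A P)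
    {α : ℝ} (hα : α ∈ Set.Icc (0 : ℝ) 1) (m : ℕ) :
    (relax α P)^[m] = relax (1 - (1 - α) ^ m) P := by
  induction m with
  | zero =>
    funext x
    simp [relax]
  | succ n ih =>
    have hpow_mem : 1 - (1 - α) ^ n ∈ Set.Icc (0 : ℝ) 1 := by
      have h0 : 0 ≤ (1 - α) ^ n := pow_nonneg (by linarith [hα.2]) n
      have h1 : (1 - α) ^ n ≤ 1 := pow_le_one₀ (by linarith [hα.2]) (by linarith [hα.1])
      constructor <;> linarith
    rw [Function.iterate_succ', ih, hP.relax_comp_relax hA α hpow_mem]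
    ring_nf

end IsMetricProj

end StrictlyConvex

theorem stmt_9_general {H : Type*} [NormedAddCommGroup H] [InnerProductSpace ℝ H]
    (A : Set H) (hA : A.Nonempty ∧ Convex ℝ A ∧ IsClosed A)
    (P : H → H) (hP : IsMetricProj A P)
    (α β : ℝ) (hα : α ∈ Set.Icc (0 : ℝ) 1) (hβ : β ∈ Set.Icc (0 : ℝ) 1) :
    relax α P ∘ relax β P = relax (1 - (1 - α) * (1 - β)) P ∧
    ∀ m : ℕ, 1 ≤ m → (relax α P)^[m] = relax (1 - (1 - α) ^ m) P :=
  ⟨hP.relax_comp_relax hA.2.1 α hβ, fun m _ => hP.iterate_relax hA.2.1 hα m⟩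

theorem stmt_9 {H : Type*} [NormedAddCommGroup H] [InnerProductSpace ℝ H] [CompleteSpace H]
    (A : Set H) (hA : A.Nonempty ∧ Convex ℝ A ∧ IsClosed A)
    (P : H → H) (hP : IsMetricProj A P)
    (α β : ℝ) (hα : α ∈ Set.Icc (0 : ℝ) 1) (hβ : β ∈ Set.Icc (0 : ℝ) 1) :
    relax α P ∘ relax β P = relax (1 - (1 - α) * (1 - β)) P ∧
    ∀ m : ℕ, 1 ≤ m → (relax α P)^[m] = relax (1 - (1 - α) ^ m) P :=
  stmt_9_general A hA P hP α β hα hβ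
end

section
/- The function f is twice continuously differentiable on ℝ×[0,∞) and is convex on ℝ×[0,∞). -/
/-!
Off `E n` the nearest points `a n`, `b n` are locally constant, so `g_n` is a polynomial there;
at a point `e ∈ E n` the gap product `(x - a n x) * (b n x - x)` is `O(|x - e|)`, so `g_n` and
`g_n'` vanish to second order and `g_n''` to first order. Hence `g_n` is `C²`, with derivatives
bounded in terms of the gap length `3`. To reach the boundary `z = 0`, `z` is replaced by a `C²`
extension of the identity of `[0, ∞)` that is bounded below and has bounded derivatives; every
term of the series then has derivatives up to order two bounded by a multiple of `n³ c_n`, so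
the series converges in `C²`.

For convexity, each term `c_n g_n(x) h_n(z)` is paired with `θ_n x²`, `θ_n = (81²/6) n³ c_n`.
On `z ≥ 0` the Hessian of `θ_n x² + c_n g_n(x) h_n(z)` is positive semidefinite, its
discriminant being controlled by the gap length, and `f` is the sum of these convex terms and
of `(1 - ∑ θ_n) x²`.
-/

open Set Filter Topology Real Asymptotics

theorem hasDerivAt_ite_le {g h g' h' : ℝ → ℝ} {c : ℝ}
    (hg : ∀ x, HasDerivAt g (g' x) x) (hh : ∀ x, HasDerivAt h (h' x) x)
    (hc : g c = h c) (hc' : g' c = h' c) (x : ℝ) :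
    HasDerivAt (fun y => if c ≤ y then g y else h y) (if c ≤ x then g' x else h' x) x := by
  rcases lt_trichotomy x c with hx | rfl | hx
  · rw [if_neg hx.not_ge]
    refine (hh x).congr_of_eventuallyEq ?_
    filter_upwards [Iio_mem_nhds hx] with y hy
    rw [if_neg (not_le.2 hy)]
  · rw [if_pos le_rfl]
    have hleft : HasDerivWithinAt (fun y => if x ≤ y then g y else h y) (g' x) (Iic x) x := by
      refine hc' ▸ (hh x).hasDerivWithinAt.congr (fun y hy => ?_) (by simp [hc])
      rcases (mem_Iic.1 hy).lt_or_eq with hy | rfl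
      · rw [if_neg hy.not_ge]
      · simp [hc]
    have hright : HasDerivWithinAt (fun y => if x ≤ y then g y else h y) (g' x) (Ici x) x :=
      (hg x).hasDerivWithinAt.congr (fun y hy => if_pos hy) (if_pos le_rfl)
    simpa [Iic_union_Ici] using hleft.union hright
  · rw [if_pos hx.le]
    refine (hg x).congr_of_eventuallyEq ?_
    filter_upwards [Ioi_mem_nhds hx] with y hy
    rw [if_pos (le_of_lt hy)]

theorem hasDerivAt_max_zero_pow (k : ℕ) (t : ℝ) :
    HasDerivAt (fun s : ℝ => max s 0 ^ (k + 2)) ((k + 2) * max t 0 ^ (k + 1)) t := by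
  have hpow (s : ℝ) : max s 0 ^ (k + 2) = if 0 ≤ s then s ^ (k + 2) else 0 := by
    split_ifs with hs
    · rw [max_eq_left hs]
    · rw [max_eq_right (le_of_not_ge hs), zero_pow (by omega)]
  have hglue := hasDerivAt_ite_le (c := 0) (fun s => hasDerivAt_pow (k + 2) s)
    (fun s => hasDerivAt_const s (0 : ℝ)) (by simp) (by simp) t
  simp only [← hpow] at hglue
  convert hglue using 1
  split_ifs with ht
  · rw [max_eq_left ht]; push_cast; ring
  · rw [max_eq_right (le_of_not_ge ht)]; simp

theorem hasDerivAt_zero_of_abs_le_mul_sq {f : ℝ → ℝ} {x C : ℝ}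
    (h : ∀ y, |f y| ≤ C * (y - x) ^ 2) : HasDerivAt f 0 x := by
  have hfx : f x = 0 := abs_nonpos_iff.1 (by simpa using h x)
  rw [hasDerivAt_iff_isLittleO, hfx]
  simp only [sub_zero, smul_zero]
  refine IsBigO.trans_isLittleO ?_ (isLittleO_pow_sub_sub x one_lt_two)
  exact IsBigO.of_bound C (Eventually.of_forall fun y => by simpa [sq_abs] using h y)

theorem continuousAt_of_abs_le_mul_abs {f : ℝ → ℝ} {x C : ℝ}
    (h : ∀ y, |f y| ≤ C * |y - x|) : ContinuousAt f x := by
  have hfx : f x = 0 := abs_nonpos_iff.1 (by simpa using h x)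
  have hlim : Tendsto (fun y => C * |y - x|) (𝓝 x) (𝓝 0) := by
    simpa using (((continuous_id.sub continuous_const).abs.const_mul C).tendsto x :
      Tendsto (fun y : ℝ => C * |y - x|) (𝓝 x) (𝓝 (C * |x - x|)))
  rw [ContinuousAt, hfx]
  exact squeeze_zero_norm h hlim

theorem contDiff_two_of_hasDerivAt {f f' f'' : ℝ → ℝ} (hf : ∀ x, HasDerivAt f (f' x) x)
    (hf' : ∀ x, HasDerivAt f' (f'' x) x) (hf'' : Continuous f'') : ContDiff ℝ 2 f := by
  have hderiv : deriv f = f' := funext fun x => (hf x).deriv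
  have hderiv' : deriv f' = f'' := funext fun x => (hf' x).deriv
  rw [show (2 : WithTop ℕ∞) = 1 + 1 from rfl, contDiff_succ_iff_deriv, hderiv,
    contDiff_one_iff_deriv, hderiv']
  exact ⟨fun x => (hf x).differentiableAt, by simp, fun x => (hf' x).differentiableAt, hf''⟩

theorem norm_iteratedFDeriv_le_of_hasDerivAt {f f' f'' : ℝ → ℝ} {C : ℝ}
    (hf : ∀ x, HasDerivAt f (f' x) x) (hf' : ∀ x, HasDerivAt f' (f'' x) x)
    (h0 : ∀ x, |f x| ≤ C) (h1 : ∀ x, |f' x| ≤ C) (h2 : ∀ x, |f'' x| ≤ C)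
    {k : ℕ} (hk : k ≤ 2) (x : ℝ) : ‖iteratedFDeriv ℝ k f x‖ ≤ C := by
  have hderiv : deriv f = f' := funext fun x => (hf x).deriv
  have hderiv' : deriv f' = f'' := funext fun x => (hf' x).deriv
  rw [norm_iteratedFDeriv_eq_norm_iteratedDeriv, Real.norm_eq_abs]
  interval_cases k
  · simpa using h0 x
  · simpa [hderiv] using h1 x
  · simpa [iteratedDeriv_succ, hderiv, hderiv'] using h2 x

theorem ContinuousLinearMap.norm_iteratedFDeriv_comp_right_le {E F G : Type*}
    [NormedAddCommGroup E] [NormedSpace ℝ E] [NormedAddCommGroup F] [NormedSpace ℝ F]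
    [NormedAddCommGroup G] [NormedSpace ℝ G] {N : WithTop ℕ∞} {f : E → F}
    (hf : ContDiff ℝ N f) (L : G →L[ℝ] E) (hL : ‖L‖ ≤ 1) (x : G) {k : ℕ}
    (hk : k ≤ N) :
    ‖iteratedFDeriv ℝ k (f ∘ L) x‖ ≤ ‖iteratedFDeriv ℝ k f (L x)‖ := by
  rw [L.iteratedFDeriv_comp_right hf x hk]
  refine (ContinuousMultilinearMap.norm_compContinuousLinearMap_le _ _).trans ?_
  exact mul_le_of_le_one_right (norm_nonneg _)
    (Finset.prod_le_one (fun _ _ => norm_nonneg _) fun _ _ => hL)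

theorem contDiff_tsum_mul_fst_snd {ι E F : Type*} [NormedAddCommGroup E]
    [NormedSpace ℝ E] [NormedAddCommGroup F] [NormedSpace ℝ F] {N : ℕ}
    {A : ι → E → ℝ} {B : ι → F → ℝ} {α β : ι → ℝ}
    (hA : ∀ i, ContDiff ℝ N (A i)) (hB : ∀ i, ContDiff ℝ N (B i))
    (hAle : ∀ i k x, k ≤ N → ‖iteratedFDeriv ℝ k (A i) x‖ ≤ α i)
    (hBle : ∀ i k z, k ≤ N → ‖iteratedFDeriv ℝ k (B i) z‖ ≤ β i)
    (hαβ : Summable fun i => α i * β i) :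
    ContDiff ℝ N fun p : E × F => ∑' i, A i p.1 * B i p.2 := by
  have hA' (i : ι) : ContDiff ℝ N (A i ∘ ContinuousLinearMap.fst ℝ E F) :=
    (hA i).comp (ContinuousLinearMap.fst ℝ E F).contDiff
  have hB' (i : ι) : ContDiff ℝ N (B i ∘ ContinuousLinearMap.snd ℝ E F) :=
    (hB i).comp (ContinuousLinearMap.snd ℝ E F).contDiff
  refine contDiff_tsum (v := fun k i => 2 ^ k * (α i * β i))
    (fun i => (hA' i).mul (hB' i)) (fun k _ => hαβ.mul_left _) fun k i p hk => ?_
  have hkN : k ≤ N := by exact_mod_cast hk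
  have hα : 0 ≤ α i := (norm_nonneg _).trans (hAle i 0 p.1 (Nat.zero_le _))
  refine (norm_iteratedFDeriv_mul_le (hA' i) (hB' i) p (by exact_mod_cast hkN)).trans ?_
  calc ∑ j ∈ Finset.range (k + 1), (k.choose j : ℝ) *
        ‖iteratedFDeriv ℝ j (A i ∘ ContinuousLinearMap.fst ℝ E F) p‖ *
        ‖iteratedFDeriv ℝ (k - j) (B i ∘ ContinuousLinearMap.snd ℝ E F) p‖
      ≤ ∑ j ∈ Finset.range (k + 1), (k.choose j : ℝ) * α i * β i := by
        refine Finset.sum_le_sum fun j hj => ?_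
        have hjk : j ≤ k := Nat.lt_succ_iff.1 (Finset.mem_range.1 hj)
        have hAj := ((ContinuousLinearMap.fst ℝ E F).norm_iteratedFDeriv_comp_right_le (hA i)
          (ContinuousLinearMap.norm_fst_le ℝ E F) p (by exact_mod_cast hjk.trans hkN)).trans
          (hAle i j p.1 (hjk.trans hkN))
        have hBj := ((ContinuousLinearMap.snd ℝ E F).norm_iteratedFDeriv_comp_right_le (hB i)
          (ContinuousLinearMap.norm_snd_le ℝ E F) p
          (by exact_mod_cast (k.sub_le j).trans hkN)).trans
          (hBle i (k - j) p.2 ((k.sub_le j).trans hkN))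
        gcongr
    _ = 2 ^ k * (α i * β i) := by
        rw [← Finset.sum_mul, ← Finset.sum_mul, mul_assoc]
        exact_mod_cast congrArg (fun m : ℕ => (m : ℝ) * (α i * β i)) (Nat.sum_range_choose k)

theorem convexOn_of_convexOn_segment {E : Type*} [AddCommGroup E] [Module ℝ E] {s : Set E}
    {F : E → ℝ} (hs : Convex ℝ s)
    (h : ∀ p ∈ s, ∀ q ∈ s, ConvexOn ℝ (Icc 0 1) fun t : ℝ => F (p + t • (q - p))) :
    ConvexOn ℝ s F := by
  refine ⟨hs, fun p hp q hq α β hα hβ hαβ => ?_⟩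
  have := (h p hp q hq).2 (left_mem_Icc.2 zero_le_one) (right_mem_Icc.2 zero_le_one) hα hβ hαβ
  obtain rfl : α = 1 - β := by linarith
  have hpt : p + β • (q - p) = (1 - β) • p + β • q := by module
  simpa [hpt] using this

theorem ConvexOn.tsum {ι E : Type*} [AddCommGroup E] [Module ℝ E] {s : Set E}
    {F : ι → E → ℝ} (hs : Convex ℝ s) (hF : ∀ i, ConvexOn ℝ s (F i))
    (hsum : ∀ x ∈ s, Summable fun i => F i x) :
    ConvexOn ℝ s fun x => ∑' i, F i x := by
  refine ⟨hs, fun p hp q hq α β hα hβ hαβ => ?_⟩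
  calc ∑' i, F i (α • p + β • q) ≤ ∑' i, (α * F i p + β * F i q) :=
        (hsum _ (hs hp hq hα hβ hαβ)).tsum_le_tsum (fun i => (hF i).2 hp hq hα hβ hαβ)
          (((hsum p hp).mul_left α).add ((hsum q hq).mul_left β))
    _ = α • ∑' i, F i p + β • ∑' i, F i q := by
        rw [((hsum p hp).mul_left α).tsum_add ((hsum q hq).mul_left β), tsum_mul_left,
          tsum_mul_left, smul_eq_mul, smul_eq_mul]

theorem quadratic_nonneg {A B C x y : ℝ} (hA : 0 ≤ A) (hC : 0 ≤ C) (hB : B ^ 2 ≤ A * C) :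
    0 ≤ A * x ^ 2 + 2 * B * (x * y) + C * y ^ 2 := by
  rcases hA.eq_or_lt with rfl | hA
  · obtain rfl : B = 0 := by nlinarith [sq_nonneg B]
    simpa using mul_nonneg hC (sq_nonneg y)
  · nlinarith [sq_nonneg (A * x + B * y), mul_nonneg hC (sq_nonneg y)]

theorem convexOn_sq_add_mul {θ : ℝ} {A A' A'' B B' B'' : ℝ → ℝ} {I : Set ℝ}
    (hI : Convex ℝ I) (hA : ∀ x, HasDerivAt A (A' x) x) (hA' : ∀ x, HasDerivAt A' (A'' x) x)
    (hB : ∀ z, HasDerivAt B (B' z) z) (hB' : ∀ z, HasDerivAt B' (B'' z) z)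
    (hhess : ∀ x, ∀ z ∈ I, ∀ dx dz, 0 ≤ 2 * θ * dx ^ 2 + A'' x * B z * dx ^ 2 +
      2 * (A' x * B' z) * (dx * dz) + A x * B'' z * dz ^ 2) :
    ConvexOn ℝ (univ ×ˢ I) fun p => θ * p.1 ^ 2 + A p.1 * B p.2 := by
  refine convexOn_of_convexOn_segment (convex_univ.prod hI) fun p hp q hq => ?_
  set dx := q.1 - p.1
  set dz := q.2 - p.2
  have hX (t : ℝ) : HasDerivAt (fun t => p.1 + t * dx) dx t := by
    simpa using ((hasDerivAt_id t).mul_const dx).const_add p.1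
  have hZ (t : ℝ) : HasDerivAt (fun t => p.2 + t * dz) dz t := by
    simpa using ((hasDerivAt_id t).mul_const dz).const_add p.2
  have hφ (t : ℝ) : HasDerivAt
      (fun t => θ * (p.1 + t * dx) ^ 2 + A (p.1 + t * dx) * B (p.2 + t * dz))
      (θ * (2 * (p.1 + t * dx) * dx) + (A' (p.1 + t * dx) * dx * B (p.2 + t * dz) +
        A (p.1 + t * dx) * (B' (p.2 + t * dz) * dz))) t := by
    have hsq := (hX t).fun_pow 2
    refine ((hsq.const_mul θ).fun_add (((hA _).comp t (hX t)).fun_mul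
      ((hB _).comp t (hZ t)))).congr_deriv ?_
    simp only [Function.comp_apply]; push_cast; ring
  have hφ' (t : ℝ) : HasDerivAt (fun t => θ * (2 * (p.1 + t * dx) * dx) +
      (A' (p.1 + t * dx) * dx * B (p.2 + t * dz) + A (p.1 + t * dx) * (B' (p.2 + t * dz) * dz)))
      (2 * θ * dx ^ 2 + A'' (p.1 + t * dx) * B (p.2 + t * dz) * dx ^ 2 +
        2 * (A' (p.1 + t * dx) * B' (p.2 + t * dz)) * (dx * dz) +
        A (p.1 + t * dx) * B'' (p.2 + t * dz) * dz ^ 2) t := by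
    have hlin := (((hX t).const_mul 2).mul_const dx).const_mul θ
    have h1 := (((hA' _).comp t (hX t)).mul_const dx).fun_mul ((hB _).comp t (hZ t))
    have h2 := ((hA _).comp t (hX t)).fun_mul (((hB' _).comp t (hZ t)).mul_const dz)
    exact (hlin.fun_add (h1.fun_add h2)).congr_deriv (by simp only [Function.comp_apply]; ring)
  have hconv := convexOn_of_hasDerivWithinAt2_nonneg (convex_Icc (0 : ℝ) 1)
    (fun t _ => (hφ t).continuousAt.continuousWithinAt) (fun t _ => (hφ t).hasDerivWithinAt)
    (fun t _ => (hφ' t).hasDerivWithinAt) fun t ht => by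
      rw [interior_Icc] at ht
      exact hhess _ _ (hI.add_smul_sub_mem hp.2 hq.2 ⟨ht.1.le, ht.2.le⟩) dx dz
  refine hconv.congr fun t _ => ?_
  simp [dx, dz, smul_eq_mul]

-- `arctan` agrees with the identity to second order at `0`, which makes this `C²`.
noncomputable def idArctan (z : ℝ) : ℝ := if 0 ≤ z then z else arctan z

noncomputable def idArctanDeriv (z : ℝ) : ℝ := if 0 ≤ z then 1 else 1 / (1 + z ^ 2)

noncomputable def idArctanDeriv2 (z : ℝ) : ℝ :=
  if 0 ≤ z then 0 else -(2 * z) / (1 + z ^ 2) ^ 2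

theorem hasDerivAt_idArctan (z : ℝ) : HasDerivAt idArctan (idArctanDeriv z) z :=
  hasDerivAt_ite_le (g := fun y => y) (h := arctan) (fun y => hasDerivAt_id' y) hasDerivAt_arctan
    (by simp) (by simp) z

theorem hasDerivAt_idArctanDeriv (z : ℝ) : HasDerivAt idArctanDeriv (idArctanDeriv2 z) z := by
  refine hasDerivAt_ite_le (g := fun _ => 1) (h := fun y => 1 / (1 + y ^ 2)) (g' := fun _ => 0)
    (h' := fun y => -(2 * y) / (1 + y ^ 2) ^ 2) (fun y => hasDerivAt_const y 1) (fun x => ?_)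
    (by simp) (by simp) z
  have hsq : HasDerivAt (fun y : ℝ => 1 + y ^ 2) (2 * x) x := by
    simpa using (hasDerivAt_pow 2 x).const_add 1
  simpa only [one_div] using hsq.fun_inv (by positivity)

theorem continuous_idArctanDeriv2 : Continuous idArctanDeriv2 :=
  continuous_const.if_le (by fun_prop (disch := intro x; positivity)) continuous_const continuous_id
    fun x hx => by simp [← hx]

theorem neg_two_le_idArctan (z : ℝ) : -2 ≤ idArctan z := by
  unfold idArctan
  split_ifs with hz
  · linarith
  · linarith [neg_pi_div_two_lt_arctan z, pi_lt_four]

theorem abs_idArctanDeriv_le_one (z : ℝ) : |idArctanDeriv z| ≤ 1 := by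
  unfold idArctanDeriv
  split_ifs
  · simp
  · rw [abs_of_pos (by positivity), div_le_one (by positivity)]
    nlinarith [sq_nonneg z]

theorem abs_idArctanDeriv2_le_one (z : ℝ) : |idArctanDeriv2 z| ≤ 1 := by
  unfold idArctanDeriv2
  split_ifs
  · simp
  · rw [abs_div, abs_neg, abs_of_pos (by positivity : (0 : ℝ) < (1 + z ^ 2) ^ 2),
      div_le_one (by positivity)]
    have : |2 * z| ≤ 1 + z ^ 2 := abs_le.2 ⟨by nlinarith [sq_nonneg (z + 1)],
      by nlinarith [sq_nonneg (z - 1)]⟩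
    nlinarith [sq_nonneg z]

/-- The factor `h(z) = max (M - z) 0 ^ 3` of the paper, extended from `z ≥ 0` to a `C²` function
on `ℝ` whose first two derivatives are bounded uniformly in `z`. -/
noncomputable def rampCube (M z : ℝ) : ℝ := max (M - idArctan z) 0 ^ 3

noncomputable def rampCubeDeriv (M z : ℝ) : ℝ :=
  -(3 * max (M - idArctan z) 0 ^ 2 * idArctanDeriv z)

noncomputable def rampCubeDeriv2 (M z : ℝ) : ℝ :=
  6 * max (M - idArctan z) 0 * idArctanDeriv z ^ 2 -
    3 * max (M - idArctan z) 0 ^ 2 * idArctanDeriv2 z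

theorem hasDerivAt_rampCube (M z : ℝ) : HasDerivAt (rampCube M) (rampCubeDeriv M z) z := by
  have := (hasDerivAt_max_zero_pow 1 (M - idArctan z)).comp z
    ((hasDerivAt_idArctan z).const_sub M)
  refine this.congr_deriv ?_
  simp only [rampCubeDeriv]
  push_cast
  ring

theorem hasDerivAt_rampCubeDeriv (M z : ℝ) :
    HasDerivAt (rampCubeDeriv M) (rampCubeDeriv2 M z) z := by
  have h := (hasDerivAt_max_zero_pow 0 (M - idArctan z)).comp z
    ((hasDerivAt_idArctan z).const_sub M)
  refine (((h.const_mul 3).fun_mul (hasDerivAt_idArctanDeriv z)).fun_neg).congr_deriv ?_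
  simp only [rampCubeDeriv2, Function.comp_apply]
  push_cast
  ring

theorem continuous_rampCubeDeriv2 (M : ℝ) : Continuous (rampCubeDeriv2 M) := by
  have h0 : Continuous idArctan :=
    continuous_iff_continuousAt.2 fun z => (hasDerivAt_idArctan z).continuousAt
  have h1 : Continuous idArctanDeriv :=
    continuous_iff_continuousAt.2 fun z => (hasDerivAt_idArctanDeriv z).continuousAt
  have h2 := continuous_idArctanDeriv2
  unfold rampCubeDeriv2
  fun_prop

theorem rampCube_of_nonneg (M : ℝ) {z : ℝ} (hz : 0 ≤ z) :
    rampCube M z = max (M - z) 0 ^ 3 := by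
  simp [rampCube, idArctan, hz]

theorem rampCubeDeriv_of_nonneg (M : ℝ) {z : ℝ} (hz : 0 ≤ z) :
    rampCubeDeriv M z = -(3 * max (M - z) 0 ^ 2) := by
  simp [rampCubeDeriv, idArctan, idArctanDeriv, hz]

theorem rampCubeDeriv2_of_nonneg (M : ℝ) {z : ℝ} (hz : 0 ≤ z) :
    rampCubeDeriv2 M z = 6 * max (M - z) 0 := by
  simp [rampCubeDeriv2, idArctan, idArctanDeriv, idArctanDeriv2, hz]

section Bounds

variable {M : ℝ} (hM : 1 ≤ M) (z : ℝ)
include hM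

theorem max_sub_idArctan_le : max (M - idArctan z) 0 ≤ 3 * M :=
  max_le (by linarith [neg_two_le_idArctan z]) (by linarith)

theorem abs_rampCube_le : |rampCube M z| ≤ 45 * M ^ 3 := by
  have hm := max_sub_idArctan_le hM z
  rw [rampCube, abs_of_nonneg (by positivity)]
  nlinarith [pow_le_pow_left₀ (le_max_right _ _) hm 3,
    pow_nonneg (by linarith : (0 : ℝ) ≤ M) 3]

theorem abs_rampCubeDeriv_le : |rampCubeDeriv M z| ≤ 45 * M ^ 3 := by
  have hm := max_sub_idArctan_le hM z
  have hm2 := pow_le_pow_left₀ (le_max_right _ _) hm 2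
  rw [rampCubeDeriv, abs_neg, abs_mul, abs_of_nonneg (by positivity)]
  nlinarith [mul_le_mul (mul_le_mul_of_nonneg_left hm2 (by norm_num : (0 : ℝ) ≤ 3))
    (abs_idArctanDeriv_le_one z) (abs_nonneg _) (by positivity)]

theorem abs_rampCubeDeriv2_le : |rampCubeDeriv2 M z| ≤ 45 * M ^ 3 := by
  have hm := max_sub_idArctan_le hM z
  have hm2 := pow_le_pow_left₀ (le_max_right _ _) hm 2
  have hd1 := abs_idArctanDeriv_le_one z
  have hd2 := abs_idArctanDeriv2_le_one z
  have hsq : idArctanDeriv z ^ 2 ≤ 1 := by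
    rw [← sq_abs]; exact pow_le_one₀ (abs_nonneg _) hd1
  have hm0 : 0 ≤ max (M - idArctan z) 0 := le_max_right _ _
  have h1 : |6 * max (M - idArctan z) 0 * idArctanDeriv z ^ 2| ≤ 18 * M := by
    rw [abs_of_nonneg (by positivity)]
    nlinarith [mul_le_mul hm hsq (sq_nonneg _) (by linarith)]
  have h2 : |3 * max (M - idArctan z) 0 ^ 2 * idArctanDeriv2 z| ≤ 27 * M ^ 2 := by
    rw [abs_mul, abs_of_nonneg (by positivity)]
    nlinarith [mul_le_mul hm2 hd2 (abs_nonneg _) (by positivity)]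
  have hM2 : M ^ 2 ≤ M ^ 3 := pow_le_pow_right₀ hM (by norm_num)
  have hM1 : M ≤ M ^ 3 := by simpa using pow_le_pow_right₀ hM (by norm_num : 1 ≤ 3)
  rw [rampCubeDeriv2]
  linarith [abs_sub (6 * max (M - idArctan z) 0 * idArctanDeriv z ^ 2)
    (3 * max (M - idArctan z) 0 ^ 2 * idArctanDeriv2 z)]

end Bounds

noncomputable def gapCube (a b : ℝ → ℝ) (x : ℝ) : ℝ := (x - a x) ^ 3 * (b x - x) ^ 3

noncomputable def gapCubeDeriv (a b : ℝ → ℝ) (x : ℝ) : ℝ :=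
  3 * ((x - a x) ^ 2 * (b x - x) ^ 2) * ((b x - x) - (x - a x))

noncomputable def gapCubeDeriv2 (a b : ℝ → ℝ) (x : ℝ) : ℝ :=
  6 * ((x - a x) * (b x - x)) * ((x - a x) ^ 2 - 3 * ((x - a x) * (b x - x)) + (b x - x) ^ 2)

theorem hasDerivAt_gapCube_const (p q x : ℝ) :
    HasDerivAt (gapCube (fun _ => p) (fun _ => q))
      (gapCubeDeriv (fun _ => p) (fun _ => q) x) x := by
  have hu := (hasDerivAt_id x).sub_const p
  have hv := (hasDerivAt_id x).const_sub q
  refine ((hu.fun_pow 3).fun_mul (hv.fun_pow 3)).congr_deriv ?_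
  simp only [gapCubeDeriv, id]
  push_cast
  ring

theorem hasDerivAt_gapCubeDeriv_const (p q x : ℝ) :
    HasDerivAt (gapCubeDeriv (fun _ => p) (fun _ => q))
      (gapCubeDeriv2 (fun _ => p) (fun _ => q) x) x := by
  have hu := (hasDerivAt_id x).sub_const p
  have hv := (hasDerivAt_id x).const_sub q
  refine ((((hu.fun_pow 2).fun_mul (hv.fun_pow 2)).const_mul 3).fun_mul
    (hv.fun_sub hu)).congr_deriv ?_
  simp only [gapCubeDeriv2, id]
  push_cast
  ring

theorem gapPoly_bounds {u v L : ℝ} (hu : 0 ≤ u) (hv : 0 ≤ v) (huv : u + v ≤ L) :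
    0 ≤ u * v ∧ u * v ≤ L ^ 2 / 4 ∧ |v - u| ≤ L ∧
      |u ^ 2 - 3 * (u * v) + v ^ 2| ≤ 2 * L ^ 2 :=
  ⟨mul_nonneg hu hv, by nlinarith [sq_nonneg (u - v)], abs_le.2 ⟨by linarith, by linarith⟩,
    abs_le.2 ⟨by nlinarith, by nlinarith⟩⟩

section NearestPoints

variable {S : Set ℝ} {a b : ℝ → ℝ}
  (ha : ∀ x, IsGreatest (S ∩ Iic x) (a x)) (hb : ∀ x, IsLeast (S ∩ Ici x) (b x))
include ha hb

theorem nearest_eq_of_mem {x : ℝ} (hx : x ∈ S) : a x = x ∧ b x = x :=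
  ⟨le_antisymm (ha x).1.2 ((ha x).2 ⟨hx, le_refl x⟩),
    le_antisymm ((hb x).2 ⟨hx, le_refl x⟩) (hb x).1.2⟩

theorem notMem_of_nearest_lt_of_lt_nearest {x e : ℝ} (h1 : a x < e) (h2 : e < b x) : e ∉ S :=
  fun he => (le_total e x).elim (fun h => h1.not_ge ((ha x).2 ⟨he, h⟩))
    fun h => h2.not_ge ((hb x).2 ⟨he, h⟩)

theorem eventually_nearest_eq_of_notMem {x : ℝ} (hx : x ∉ S) :
    ∀ᶠ y in 𝓝 x, a y = a x ∧ b y = b x := by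
  have hax : a x < x := (ha x).1.2.lt_of_ne fun h => hx (h ▸ (ha x).1.1)
  have hxb : x < b x := (hb x).1.2.lt_of_ne' fun h => hx (h ▸ (hb x).1.1)
  filter_upwards [Ioo_mem_nhds hax hxb] with y ⟨hay, hyb⟩
  constructor
  · refine le_antisymm (not_lt.1 fun h => ?_) ((ha y).2 ⟨(ha x).1.1, hay.le⟩)
    exact notMem_of_nearest_lt_of_lt_nearest ha hb h ((ha y).1.2.out.trans_lt hyb) (ha y).1.1
  · refine le_antisymm ((hb y).2 ⟨(hb x).1.1, hyb.le⟩) (not_lt.1 fun h => ?_)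
    exact notMem_of_nearest_lt_of_lt_nearest ha hb (hay.trans_le (hb y).1.2.out) h (hb y).1.1

theorem sub_nearest_nonneg (x : ℝ) : 0 ≤ x - a x ∧ 0 ≤ b x - x :=
  ⟨sub_nonneg.2 (ha x).1.2, sub_nonneg.2 (hb x).1.2⟩

theorem nearest_sub_nearest_le {l r : ℝ} (hlr : l ≤ r) (hS : (Ioo l r)ᶜ ⊆ S) (x : ℝ) :
    b x - a x ≤ r - l := by
  by_cases hx : x ∈ S
  · obtain ⟨hax, hbx⟩ := nearest_eq_of_mem ha hb hx
    linarith
  · have hx' : x ∈ Ioo l r := by_contra fun h => hx (hS h)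
    have hl : l ≤ a x := (ha x).2 ⟨hS fun h => h.1.false, hx'.1.le⟩
    have hr : b x ≤ r := (hb x).2 ⟨hS fun h => h.2.false, hx'.2.le⟩
    linarith

variable {L : ℝ} (hgap : ∀ x, b x - a x ≤ L)
include hgap

theorem gapProd_le_mul_abs {x : ℝ} (hx : x ∈ S) (y : ℝ) :
    (y - a y) * (b y - y) ≤ L * |y - x| := by
  obtain ⟨hu, hv⟩ := sub_nearest_nonneg ha hb y
  have hL := hgap y
  rcases le_total x y with h | h
  · have : x ≤ a y := (ha y).2 ⟨hx, h⟩
    rw [abs_of_nonneg (sub_nonneg.2 h)]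
    nlinarith
  · have : b y ≤ x := (hb y).2 ⟨hx, h⟩
    rw [abs_of_nonpos (sub_nonpos.2 h)]
    nlinarith

theorem nearest_gapPoly_bounds (x : ℝ) :
    0 ≤ (x - a x) * (b x - x) ∧ (x - a x) * (b x - x) ≤ L ^ 2 / 4 ∧
      |(b x - x) - (x - a x)| ≤ L ∧
      |(x - a x) ^ 2 - 3 * ((x - a x) * (b x - x)) + (b x - x) ^ 2| ≤ 2 * L ^ 2 :=
  gapPoly_bounds (sub_nearest_nonneg ha hb x).1 (sub_nearest_nonneg ha hb x).2
    (by linarith [hgap x])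

theorem hasDerivAt_gapCube (x : ℝ) : HasDerivAt (gapCube a b) (gapCubeDeriv a b x) x := by
  by_cases hx : x ∈ S
  · obtain ⟨hax, hbx⟩ := nearest_eq_of_mem ha hb hx
    have hzero : gapCubeDeriv a b x = 0 := by simp [gapCubeDeriv, hax, hbx]
    rw [hzero]
    refine hasDerivAt_zero_of_abs_le_mul_sq (C := L ^ 4 / 4) fun y => ?_
    obtain ⟨hw0, hwL, -, -⟩ := nearest_gapPoly_bounds ha hb hgap y
    have hw := gapProd_le_mul_abs ha hb hgap hx y
    have hw2 : ((y - a y) * (b y - y)) ^ 2 ≤ L ^ 2 * (y - x) ^ 2 := by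
      rw [← sq_abs (y - x), ← mul_pow]; exact pow_le_pow_left₀ hw0 hw 2
    rw [gapCube, ← mul_pow, abs_of_nonneg (pow_nonneg hw0 3)]
    nlinarith [mul_le_mul hw2 hwL hw0 (by positivity)]
  · refine (hasDerivAt_gapCube_const (a x) (b x) x).congr_of_eventuallyEq ?_
    filter_upwards [eventually_nearest_eq_of_notMem ha hb hx] with y hy
    simp only [gapCube, hy.1, hy.2]

theorem hasDerivAt_gapCubeDeriv (x : ℝ) :
    HasDerivAt (gapCubeDeriv a b) (gapCubeDeriv2 a b x) x := by
  by_cases hx : x ∈ S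
  · obtain ⟨hax, hbx⟩ := nearest_eq_of_mem ha hb hx
    have hzero : gapCubeDeriv2 a b x = 0 := by simp [gapCubeDeriv2, hax, hbx]
    rw [hzero]
    refine hasDerivAt_zero_of_abs_le_mul_sq (C := 3 * L ^ 3) fun y => ?_
    obtain ⟨hw0, -, hvu, -⟩ := nearest_gapPoly_bounds ha hb hgap y
    have hw := gapProd_le_mul_abs ha hb hgap hx y
    have hw2 : ((y - a y) * (b y - y)) ^ 2 ≤ L ^ 2 * (y - x) ^ 2 := by
      rw [← sq_abs (y - x), ← mul_pow]; exact pow_le_pow_left₀ hw0 hw 2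
    rw [gapCubeDeriv, ← mul_pow, abs_mul, abs_of_nonneg (by positivity)]
    nlinarith [mul_le_mul hw2 hvu (abs_nonneg _) (by positivity)]
  · refine (hasDerivAt_gapCubeDeriv_const (a x) (b x) x).congr_of_eventuallyEq ?_
    filter_upwards [eventually_nearest_eq_of_notMem ha hb hx] with y hy
    simp only [gapCubeDeriv, hy.1, hy.2]

theorem continuous_gapCubeDeriv2 : Continuous (gapCubeDeriv2 a b) := by
  refine continuous_iff_continuousAt.2 fun x => ?_
  by_cases hx : x ∈ S
  · refine continuousAt_of_abs_le_mul_abs (C := 12 * L ^ 3) fun y => ?_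
    obtain ⟨hw0, -, -, hq⟩ := nearest_gapPoly_bounds ha hb hgap y
    have hw := gapProd_le_mul_abs ha hb hgap hx y
    rw [gapCubeDeriv2, abs_mul, abs_of_nonneg (by positivity)]
    nlinarith [mul_le_mul hw hq (abs_nonneg _) (hw0.trans hw)]
  · have hpoly : Continuous (gapCubeDeriv2 (fun _ => a x) (fun _ => b x)) := by
      unfold gapCubeDeriv2; fun_prop
    refine hpoly.continuousAt.congr_of_eventuallyEq ?_
    filter_upwards [eventually_nearest_eq_of_notMem ha hb hx] with y hy
    simp only [gapCubeDeriv2, hy.1, hy.2]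

theorem abs_gapCube_le (x : ℝ) : |gapCube a b x| ≤ L ^ 6 := by
  obtain ⟨hw0, hwL, -, -⟩ := nearest_gapPoly_bounds ha hb hgap x
  rw [gapCube, ← mul_pow, abs_of_nonneg (by positivity)]
  calc _ ≤ (L ^ 2 / 4) ^ 3 := pow_le_pow_left₀ hw0 hwL 3
    _ ≤ L ^ 6 := by ring_nf; nlinarith [pow_nonneg (sq_nonneg L) 3]

theorem abs_gapCubeDeriv_le (x : ℝ) : |gapCubeDeriv a b x| ≤ 3 * L ^ 5 := by
  obtain ⟨hw0, hwL, hvu, -⟩ := nearest_gapPoly_bounds ha hb hgap x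
  have hw2 : ((x - a x) * (b x - x)) ^ 2 ≤ L ^ 4 := by
    calc _ ≤ (L ^ 2 / 4) ^ 2 := pow_le_pow_left₀ hw0 hwL 2
      _ ≤ L ^ 4 := by ring_nf; nlinarith [pow_nonneg (sq_nonneg L) 2]
  rw [gapCubeDeriv, ← mul_pow, abs_mul, abs_of_nonneg (by positivity)]
  nlinarith [mul_le_mul hw2 hvu (abs_nonneg _) (by positivity)]

theorem abs_gapCubeDeriv2_le (x : ℝ) : |gapCubeDeriv2 a b x| ≤ 3 * L ^ 4 := by
  obtain ⟨hw0, hwL, -, hq⟩ := nearest_gapPoly_bounds ha hb hgap x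
  rw [gapCubeDeriv2, abs_mul, abs_of_nonneg (by positivity)]
  nlinarith [mul_le_mul hwL hq (abs_nonneg _) (by positivity)]

end NearestPoints

/- With `w = u * v ≤ 9 / 4` one has `6 w (u² - 3w + v²) ≥ -31`, so the `dx²` coefficient is
at least `(2187 - 31) c m³`, and the discriminant condition comes down to
`81 · 9 · 9/4 ≤ 6 · 2156`; `2187 = 2 · 81² / 6` is where the constant of the statement
enters. -/
theorem gap_hessian_nonneg {u v m M c dx dz : ℝ} (hu : 0 ≤ u) (hv : 0 ≤ v) (huv : u + v ≤ 3)
    (hm : 0 ≤ m) (hmM : m ≤ M) (hc : 0 ≤ c) :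
    0 ≤ 2 * (81 ^ 2 / 6 * M ^ 3 * c) * dx ^ 2
      + c * (6 * (u * v) * (u ^ 2 - 3 * (u * v) + v ^ 2)) * m ^ 3 * dx ^ 2
      + 2 * (c * (3 * (u ^ 2 * v ^ 2) * (v - u)) * -(3 * m ^ 2)) * (dx * dz)
      + c * (u ^ 3 * v ^ 3) * (6 * m) * dz ^ 2 := by
  have hw0 : 0 ≤ u * v := mul_nonneg hu hv
  have hw : u * v ≤ 9 / 4 := by nlinarith [sq_nonneg (u - v)]
  have hvu : (v - u) ^ 2 ≤ 9 := by nlinarith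
  have hS : 0 ≤ c ^ 2 * ((u * v) ^ 3 * m ^ 4) := by positivity
  have hA : c * (2156 * m ^ 3) ≤
      2 * (81 ^ 2 / 6 * M ^ 3 * c) + c * (6 * (u * v) * (u ^ 2 - 3 * (u * v) + v ^ 2)) * m ^ 3 := by
    have hcurv : -31 ≤ 6 * (u * v) * (u ^ 2 - 3 * (u * v) + v ^ 2) := by
      nlinarith [sq_nonneg (u - v)]
    nlinarith [mul_le_mul_of_nonneg_right hcurv (pow_nonneg hm 3),
      mul_nonneg hc (sub_nonneg.2 (pow_le_pow_left₀ hm hmM 3))]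
  have hC : 0 ≤ c * (u ^ 3 * v ^ 3) * (6 * m) := by positivity
  have hB : (c * (3 * (u ^ 2 * v ^ 2) * (v - u)) * -(3 * m ^ 2)) ^ 2 ≤
      1641 * (c ^ 2 * ((u * v) ^ 3 * m ^ 4)) := by
    have hwvu : u * v * (v - u) ^ 2 ≤ 81 / 4 := by
      nlinarith [mul_le_mul hw hvu (sq_nonneg _) (by norm_num)]
    have e : (c * (3 * (u ^ 2 * v ^ 2) * (v - u)) * -(3 * m ^ 2)) ^ 2 =
        81 * (c ^ 2 * ((u * v) ^ 3 * m ^ 4)) * (u * v * (v - u) ^ 2) := by ring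
    rw [e]
    nlinarith
  have hAC : 1641 * (c ^ 2 * ((u * v) ^ 3 * m ^ 4)) ≤
      (2 * (81 ^ 2 / 6 * M ^ 3 * c) + c * (6 * (u * v) * (u ^ 2 - 3 * (u * v) + v ^ 2)) * m ^ 3) *
        (c * (u ^ 3 * v ^ 3) * (6 * m)) := by
    have e : c * (2156 * m ^ 3) * (c * (u ^ 3 * v ^ 3) * (6 * m)) =
        12936 * (c ^ 2 * ((u * v) ^ 3 * m ^ 4)) := by ring
    nlinarith [mul_le_mul_of_nonneg_right hA hC]
  convert quadratic_nonneg (x := dx) (y := dz) ((by positivity : 0 ≤ c * (2156 * m ^ 3)).trans hA)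
    hC (hB.trans hAC) using 1
  ring

/-- `f` with `h_{n+1}` replaced by its extension `rampCube (n + 1)`; it agrees with `f` on
`z ≥ 0`. -/
noncomputable def gapSeries (a b : ℕ → ℝ → ℝ) (c : ℕ → ℝ) (p : ℝ × ℝ) : ℝ :=
  p.1 ^ 2 + ∑' n, c n * gapCube (a n) (b n) p.1 * rampCube (n + 1) p.2

section GapSeries

variable {S : ℕ → Set ℝ} {a b : ℕ → ℝ → ℝ} {c : ℕ → ℝ}
  (ha : ∀ n x, IsGreatest (S n ∩ Iic x) (a n x)) (hb : ∀ n x, IsLeast (S n ∩ Ici x) (b n x))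
  (hgap : ∀ n x, b n x - a n x ≤ 3) (hc : ∀ n, 0 ≤ c n)
include ha hb hgap hc

theorem abs_mul_gapCube_le (n : ℕ) (x : ℝ) :
    |c n * gapCube (a n) (b n) x| ≤ 729 * c n ∧
      |c n * gapCubeDeriv (a n) (b n) x| ≤ 729 * c n ∧
      |c n * gapCubeDeriv2 (a n) (b n) x| ≤ 729 * c n := by
  simp only [abs_mul, abs_of_nonneg (hc n)]
  refine ⟨?_, ?_, ?_⟩ <;> nlinarith [hc n, abs_gapCube_le (ha n) (hb n) (hgap n) x,
    abs_gapCubeDeriv_le (ha n) (hb n) (hgap n) x, abs_gapCubeDeriv2_le (ha n) (hb n) (hgap n) x]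

theorem contDiff_gapSeries (hsummable : Summable fun n : ℕ => ((n : ℝ) + 1) ^ 3 * c n) :
    ContDiff ℝ 2 (gapSeries a b c) := by
  have hM (n : ℕ) : (1 : ℝ) ≤ n + 1 := by simp
  refine (contDiff_fst.pow 2).add (contDiff_tsum_mul_fst_snd (N := 2)
    (α := fun n => 729 * c n) (β := fun n => 45 * ((n : ℝ) + 1) ^ 3)
    (fun n => (contDiff_two_of_hasDerivAt
      (fun x => (hasDerivAt_gapCube (ha n) (hb n) (hgap n) x).const_mul (c n))
      (fun x => (hasDerivAt_gapCubeDeriv (ha n) (hb n) (hgap n) x).const_mul (c n))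
      (continuous_const.mul (continuous_gapCubeDeriv2 (ha n) (hb n) (hgap n)))))
    (fun n => contDiff_two_of_hasDerivAt (hasDerivAt_rampCube _) (hasDerivAt_rampCubeDeriv _)
      (continuous_rampCubeDeriv2 _))
    (fun n k x hk => norm_iteratedFDeriv_le_of_hasDerivAt
      (fun x => (hasDerivAt_gapCube (ha n) (hb n) (hgap n) x).const_mul (c n))
      (fun x => (hasDerivAt_gapCubeDeriv (ha n) (hb n) (hgap n) x).const_mul (c n))
      (fun x => (abs_mul_gapCube_le ha hb hgap hc n x).1)
      (fun x => (abs_mul_gapCube_le ha hb hgap hc n x).2.1)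
      (fun x => (abs_mul_gapCube_le ha hb hgap hc n x).2.2) hk x)
    (fun n k z hk => norm_iteratedFDeriv_le_of_hasDerivAt (hasDerivAt_rampCube _)
      (hasDerivAt_rampCubeDeriv _) (abs_rampCube_le (hM n)) (abs_rampCubeDeriv_le (hM n))
      (abs_rampCubeDeriv2_le (hM n)) hk z)
    ((hsummable.mul_left (729 * 45)).congr fun n => by ring))

theorem summable_gapTerm (hcube : Summable fun n : ℕ => ((n : ℝ) + 1) ^ 3 * c n)
    (p : ℝ × ℝ) : Summable fun n => c n * gapCube (a n) (b n) p.1 * rampCube (n + 1) p.2 := by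
  refine (hcube.mul_left (729 * 45)).of_norm_bounded fun n => ?_
  rw [Real.norm_eq_abs, abs_mul]
  have h1 := (abs_mul_gapCube_le ha hb hgap hc n p.1).1
  have h2 := abs_rampCube_le (by simp : (1 : ℝ) ≤ n + 1) p.2
  nlinarith [mul_le_mul h1 h2 (abs_nonneg _) ((abs_nonneg _).trans h1)]

theorem convexOn_sq_add_gapTerm (n : ℕ) :
    ConvexOn ℝ (univ ×ˢ Ici 0) fun p : ℝ × ℝ =>
      81 ^ 2 / 6 * ((n : ℝ) + 1) ^ 3 * c n * p.1 ^ 2 +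
        c n * gapCube (a n) (b n) p.1 * rampCube (n + 1) p.2 := by
  refine convexOn_sq_add_mul (convex_Ici 0)
    (fun x => (hasDerivAt_gapCube (ha n) (hb n) (hgap n) x).const_mul (c n))
    (fun x => (hasDerivAt_gapCubeDeriv (ha n) (hb n) (hgap n) x).const_mul (c n))
    (hasDerivAt_rampCube _) (hasDerivAt_rampCubeDeriv _) fun x z (hz : 0 ≤ z) dx dz => ?_
  rw [rampCube_of_nonneg _ hz, rampCubeDeriv_of_nonneg _ hz, rampCubeDeriv2_of_nonneg _ hz]
  obtain ⟨hu, hv⟩ := sub_nearest_nonneg (ha n) (hb n) x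
  have := gap_hessian_nonneg (M := (n : ℝ) + 1) (dx := dx) (dz := dz) hu hv
    (by linarith [hgap n x]) (le_max_right ((n : ℝ) + 1 - z) 0)
    (max_le (by linarith) (by positivity)) (hc n)
  simpa only [gapCube, gapCubeDeriv, gapCubeDeriv2] using this

theorem convexOn_gapSeries
    (hsummable : Summable fun n : ℕ => (81 ^ 2 / 6 : ℝ) * ((n : ℝ) + 1) ^ 3 * c n)
    (hsum : ∑' n : ℕ, (81 ^ 2 / 6 : ℝ) * ((n : ℝ) + 1) ^ 3 * c n ≤ 1) :
    ConvexOn ℝ (univ ×ˢ Ici 0) (gapSeries a b c) := by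
  have hs : Convex ℝ ((univ : Set ℝ) ×ˢ Ici (0 : ℝ)) := convex_univ.prod (convex_Ici 0)
  have hprod := summable_gapTerm ha hb hgap hc
    ((hsummable.mul_left (6 / 81 ^ 2)).congr fun n => by ring)
  have hquad : ConvexOn ℝ (univ ×ˢ Ici 0) fun p : ℝ × ℝ =>
      (1 - ∑' n : ℕ, (81 ^ 2 / 6 : ℝ) * ((n : ℝ) + 1) ^ 3 * c n) * p.1 ^ 2 :=
    (((Even.convexOn_pow even_two).comp_linearMap (LinearMap.fst ℝ ℝ ℝ)).smul
      (sub_nonneg.2 hsum)).subset (subset_univ _) hs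
  refine (hquad.add (ConvexOn.tsum hs (convexOn_sq_add_gapTerm ha hb hgap hc) fun p _ =>
    (hsummable.mul_right _).add (hprod p))).congr fun p _ => ?_
  simp only [gapSeries, Pi.add_apply]
  rw [(hsummable.mul_right _).tsum_add (hprod p), tsum_mul_right]
  ring

end GapSeries

theorem stmt_11_general
    (E : ℕ → Set ℝ)
    (hEbig : ∀ n, (Set.Ioo (-1 : ℝ) 2)ᶜ ⊆ E n)
    (a b : ℕ → ℝ → ℝ)
    (ha : ∀ n x, IsGreatest (E n ∩ Set.Iic x) (a n x))
    (hb : ∀ n x, IsLeast (E n ∩ Set.Ici x) (b n x))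
    (c : ℕ → ℝ) (hc : ∀ n, 0 < c n)
    (hsummable : Summable fun n : ℕ => (81 ^ 2 / 6 : ℝ) * ((n : ℝ) + 1) ^ 3 * c n)
    (hsum : ∑' n : ℕ, (81 ^ 2 / 6 : ℝ) * ((n : ℝ) + 1) ^ 3 * c n < 1)
    (f : ℝ → ℝ → ℝ)
    (hf : ∀ x z, 0 ≤ z → f x z = x ^ 2 + ∑' n : ℕ,
      c n * ((x - a n x) ^ 3 * (b n x - x) ^ 3) * max ((n : ℝ) + 1 - z) 0 ^ 3)
    : ContDiffOn ℝ 2 (fun p : ℝ × ℝ => f p.1 p.2) (Set.univ ×ˢ Set.Ici (0 : ℝ)) ∧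
      ConvexOn ℝ (Set.univ ×ˢ Set.Ici (0 : ℝ)) (fun p : ℝ × ℝ => f p.1 p.2) := by
  have hgap (n : ℕ) (x : ℝ) : b n x - a n x ≤ 3 := by
    linarith [nearest_sub_nearest_le (ha n) (hb n) (by norm_num) (hEbig n) x]
  have hc0 (n : ℕ) : 0 ≤ c n := (hc n).le
  have hf_eq : EqOn (fun p : ℝ × ℝ => f p.1 p.2) (gapSeries a b c) (univ ×ˢ Ici 0) :=
    fun p hp => by
      simp only [hf p.1 p.2 hp.2, gapSeries, gapCube, rampCube_of_nonneg _ hp.2]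
  have hcube : Summable fun n : ℕ => ((n : ℝ) + 1) ^ 3 * c n :=
    (hsummable.mul_left (6 / 81 ^ 2)).congr fun n => by ring
  exact ⟨(contDiff_gapSeries ha hb hgap hc0 hcube).contDiffOn.congr hf_eq,
    (convexOn_gapSeries ha hb hgap hc0 hsummable hsum.le).congr hf_eq.symm⟩

theorem stmt_11
    (E : ℕ → Set ℝ)
    (hEclosed : ∀ n, IsClosed (E n))
    (hEmono : ∀ n, E n ⊆ E (n + 1))
    (hEbig : ∀ n, (Set.Ioo (-1 : ℝ) 2)ᶜ ⊆ E n)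
    (a b : ℕ → ℝ → ℝ)
    (ha : ∀ n x, IsGreatest (E n ∩ Set.Iic x) (a n x))
    (hb : ∀ n x, IsLeast (E n ∩ Set.Ici x) (b n x))
    (c : ℕ → ℝ) (hc : ∀ n, 0 < c n)
    (hsummable : Summable fun n : ℕ => (81 ^ 2 / 6 : ℝ) * ((n : ℝ) + 1) ^ 3 * c n)
    (hsum : ∑' n : ℕ, (81 ^ 2 / 6 : ℝ) * ((n : ℝ) + 1) ^ 3 * c n < 1)
    (f : ℝ → ℝ → ℝ)
    (hf : ∀ x z, 0 ≤ z → f x z = x ^ 2 + ∑' n : ℕ,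
      c n * ((x - a n x) ^ 3 * (b n x - x) ^ 3) * max ((n : ℝ) + 1 - z) 0 ^ 3)
    : ContDiffOn ℝ 2 (fun p : ℝ × ℝ => f p.1 p.2) (Set.univ ×ˢ Set.Ici (0 : ℝ)) ∧
      ConvexOn ℝ (Set.univ ×ˢ Set.Ici (0 : ℝ)) (fun p : ℝ × ℝ => f p.1 p.2) :=
  stmt_11_general E hEbig a b ha hb c hc hsummable hsum f hf
end

section
/- For every x ∈ ℝ: x ∈ ⋃_{n=1}^∞ E_n if and only if there exists z ≥ 0 with f(x,z) = x². -/
/-!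
The series vanishes at height `z` exactly when every term with `n + 1 > z` vanishes, i.e. when the
gap product `(x - a_n x)³ (b_n x - x)³` vanishes for those `n`; that product is zero iff `x ∈ E_n`,
and it decreases in `n` because the `E_n` increase. So some height works iff `x` lies in some `E_n`.
Summability, needed to read "the sum is zero" as "every term is zero", comes from bounding the gap
product by its value at `n = 0`.
-/

open Set

section Gap

variable {s t : Set ℝ} {x a b a' b' : ℝ}

lemma gap_nonneg (ha : IsGreatest (s ∩ Iic x) a) (hb : IsLeast (s ∩ Ici x) b) :
    0 ≤ (x - a) ^ 3 * (b - x) ^ 3 :=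
  mul_nonneg (pow_nonneg (sub_nonneg.2 ha.1.2) 3) (pow_nonneg (sub_nonneg.2 hb.1.2) 3)

lemma gap_eq_zero_iff (ha : IsGreatest (s ∩ Iic x) a) (hb : IsLeast (s ∩ Ici x) b) :
    (x - a) ^ 3 * (b - x) ^ 3 = 0 ↔ x ∈ s := by
  constructor
  · intro h
    rcases mul_eq_zero.1 h with h | h
    · rw [pow_eq_zero_iff three_ne_zero, sub_eq_zero] at h
      exact h ▸ ha.1.1
    · rw [pow_eq_zero_iff three_ne_zero, sub_eq_zero] at h
      exact h ▸ hb.1.1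
  · intro hx
    have : a = x := le_antisymm ha.1.2 (ha.2 ⟨hx, mem_Iic.2 le_rfl⟩)
    simp [this]

lemma gap_le_of_subset (ha : IsGreatest (s ∩ Iic x) a) (hb : IsLeast (s ∩ Ici x) b)
    (ha' : IsGreatest (t ∩ Iic x) a') (hb' : IsLeast (t ∩ Ici x) b') (hst : s ⊆ t) :
    (x - a') ^ 3 * (b' - x) ^ 3 ≤ (x - a) ^ 3 * (b - x) ^ 3 := by
  have hxa' := sub_nonneg.2 (mem_Iic.1 ha'.1.2)
  have hb'x := sub_nonneg.2 (mem_Ici.1 hb'.1.2)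
  have haa' := ha.mono ha' (inter_subset_inter_left _ hst)
  have hb'b := hb.mono hb' (inter_subset_inter_left _ hst)
  exact mul_le_mul (pow_le_pow_left₀ hxa' (by linarith) 3) (pow_le_pow_left₀ hb'x (by linarith) 3)
    (pow_nonneg hb'x 3) (pow_nonneg (by linarith) 3)

end Gap

section TruncatedSeries

variable {c u : ℕ → ℝ}

lemma mul_truncCube_nonneg (hc : ∀ n, 0 < c n) (hu0 : ∀ n, 0 ≤ u n) (z : ℝ) (n : ℕ) :
    0 ≤ c n * u n * max ((n : ℝ) + 1 - z) 0 ^ 3 :=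
  mul_nonneg (mul_nonneg (hc n).le (hu0 n)) (pow_nonneg (le_max_right _ _) 3)

lemma summable_mul_truncCube (hc : ∀ n, 0 < c n) (hu0 : ∀ n, 0 ≤ u n) (hu : Antitone u)
    (hs : Summable fun n : ℕ => ((n : ℝ) + 1) ^ 3 * c n) {z : ℝ} (hz : 0 ≤ z) :
    Summable fun n : ℕ => c n * u n * max ((n : ℝ) + 1 - z) 0 ^ 3 := by
  refine (hs.mul_left (u 0)).of_nonneg_of_le (mul_truncCube_nonneg hc hu0 z) fun n => ?_
  have hw : max ((n : ℝ) + 1 - z) 0 ^ 3 ≤ ((n : ℝ) + 1) ^ 3 :=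
    pow_le_pow_left₀ (le_max_right _ _) (max_le (by linarith) (by positivity)) 3
  calc c n * u n * max ((n : ℝ) + 1 - z) 0 ^ 3
      ≤ c n * u 0 * ((n : ℝ) + 1) ^ 3 :=
        mul_le_mul (mul_le_mul_of_nonneg_left (hu (Nat.zero_le n)) (hc n).le) hw
          (pow_nonneg (le_max_right _ _) 3) (mul_nonneg (hc n).le (hu0 0))
    _ = u 0 * (((n : ℝ) + 1) ^ 3 * c n) := by ring

lemma exists_tsum_mul_truncCube_eq_zero_iff (hc : ∀ n, 0 < c n) (hu0 : ∀ n, 0 ≤ u n)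
    (hu : Antitone u) (hs : Summable fun n : ℕ => ((n : ℝ) + 1) ^ 3 * c n) :
    (∃ z : ℝ, 0 ≤ z ∧ ∑' n : ℕ, c n * u n * max ((n : ℝ) + 1 - z) 0 ^ 3 = 0) ↔ ∃ n, u n = 0 := by
  constructor
  · rintro ⟨z, hz, hsum⟩
    have hterms := (hasSum_zero_iff_of_nonneg (mul_truncCube_nonneg hc hu0 z)).1
      ((summable_mul_truncCube hc hu0 hu hs hz).hasSum_iff.2 hsum)
    refine ⟨⌈z⌉₊, ?_⟩
    have hw : 0 < max ((⌈z⌉₊ : ℝ) + 1 - z) 0 := lt_max_of_lt_left (by linarith [Nat.le_ceil z])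
    simpa [(hc _).ne', hw.ne'] using congrFun hterms ⌈z⌉₊
  · rintro ⟨N, hN⟩
    refine ⟨N + 1, by positivity, ?_⟩
    refine (tsum_congr fun n => ?_).trans tsum_zero
    rcases le_or_gt n N with hn | hn
    · have : (n : ℝ) + 1 - (N + 1) ≤ 0 := by linarith [(Nat.cast_le (α := ℝ)).2 hn]
      rw [max_eq_right this]
      simp
    · have : u n = 0 := le_antisymm (hN ▸ hu hn.le) (hu0 n)
      simp [this]

end TruncatedSeries

theorem stmt_12_general
    (E : ℕ → Set ℝ)
    (hEmono : ∀ n, E n ⊆ E (n + 1))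
    (a b : ℕ → ℝ → ℝ)
    (ha : ∀ n x, IsGreatest (E n ∩ Set.Iic x) (a n x))
    (hb : ∀ n x, IsLeast (E n ∩ Set.Ici x) (b n x))
    (c : ℕ → ℝ) (hc : ∀ n, 0 < c n)
    (hsummable : Summable fun n : ℕ => (81 ^ 2 / 6 : ℝ) * ((n : ℝ) + 1) ^ 3 * c n)
    (f : ℝ → ℝ → ℝ)
    (hf : ∀ x z, 0 ≤ z → f x z = x ^ 2 + ∑' n : ℕ,
      c n * ((x - a n x) ^ 3 * (b n x - x) ^ 3) * max ((n : ℝ) + 1 - z) 0 ^ 3)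
    : ∀ x : ℝ, (x ∈ ⋃ n : ℕ, E n) ↔ ∃ z : ℝ, 0 ≤ z ∧ f x z = x ^ 2 := by
  intro x
  have hE : Monotone E := monotone_nat_of_le_succ hEmono
  have hs : Summable fun n : ℕ => ((n : ℝ) + 1) ^ 3 * c n := by
    simp_rw [mul_assoc] at hsummable
    exact (summable_mul_left_iff (by norm_num)).1 hsummable
  have hgap : Antitone fun n => (x - a n x) ^ 3 * (b n x - x) ^ 3 := fun m n hmn =>
    gap_le_of_subset (ha m x) (hb m x) (ha n x) (hb n x) (hE hmn)
  calc x ∈ ⋃ n, E n ↔ ∃ n, (x - a n x) ^ 3 * (b n x - x) ^ 3 = 0 := by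
        simp only [mem_iUnion, gap_eq_zero_iff (ha _ x) (hb _ x)]
    _ ↔ _ := (exists_tsum_mul_truncCube_eq_zero_iff hc (fun n => gap_nonneg (ha n x) (hb n x))
          hgap hs).symm
    _ ↔ ∃ z : ℝ, 0 ≤ z ∧ f x z = x ^ 2 :=
        exists_congr fun z => and_congr_right fun hz => by rw [hf x z hz, add_eq_left]

theorem stmt_12
    (E : ℕ → Set ℝ)
    (hEclosed : ∀ n, IsClosed (E n))
    (hEmono : ∀ n, E n ⊆ E (n + 1))
    (hEbig : ∀ n, (Set.Ioo (-1 : ℝ) 2)ᶜ ⊆ E n)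
    (a b : ℕ → ℝ → ℝ)
    (ha : ∀ n x, IsGreatest (E n ∩ Set.Iic x) (a n x))
    (hb : ∀ n x, IsLeast (E n ∩ Set.Ici x) (b n x))
    (c : ℕ → ℝ) (hc : ∀ n, 0 < c n)
    (hsummable : Summable fun n : ℕ => (81 ^ 2 / 6 : ℝ) * ((n : ℝ) + 1) ^ 3 * c n)
    (hsum : ∑' n : ℕ, (81 ^ 2 / 6 : ℝ) * ((n : ℝ) + 1) ^ 3 * c n < 1)
    (f : ℝ → ℝ → ℝ)
    (hf : ∀ x z, 0 ≤ z → f x z = x ^ 2 + ∑' n : ℕ,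
      c n * ((x - a n x) ^ 3 * (b n x - x) ^ 3) * max ((n : ℝ) + 1 - z) 0 ^ 3)
    : ∀ x : ℝ, (x ∈ ⋃ n : ℕ, E n) ↔ ∃ z : ℝ, 0 ≤ z ∧ f x z = x ^ 2 :=
  stmt_12_general E hEmono a b ha hb c hc hsummable f hf
end

section
/- For every x ∈ ℝ and z ≥ 0, if f(x,z) > x² then the partial derivative ∂f/∂z(x,z) is strictly negative. -/
/-!
For `t ≥ 0` we have `f x t = x ^ 2 + ∑' n, w n * max (n + 1 - t) 0 ^ 3` with
`w n = c n * g_n(x) ≥ 0`. Since `E n` contains the complement of `(-1, 2)`, both gaps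
`x - a n x` and `b n x - x` are at most `3`, so `w n ≤ 3 ^ 6 * c n`; this makes the termwise
derivatives `-3 * w n * max (n + 1 - t) 0 ^ 2` summably dominated for `t > -1`, and the series
may be differentiated term by term. If `f x z > x ^ 2`, some term `w n * max (n + 1 - z) 0 ^ 3`
is positive, and then so is `w n * max (n + 1 - z) 0 ^ 2`, making the derivative negative.
-/

open Set Filter Asymptotics

lemma hasDerivAt_max_zero_pow_three (u : ℝ) :
    HasDerivAt (fun v : ℝ => max v 0 ^ 3) (3 * max u 0 ^ 2) u := by
  rcases lt_trichotomy u 0 with hu | rfl | hu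
  · rw [max_eq_right hu.le]
    refine (hasDerivAt_const u (0 : ℝ)).congr_of_eventuallyEq ?_ |>.congr_deriv (by ring)
    filter_upwards [Iio_mem_nhds hu] with v hv
    simp [(mem_Iio.mp hv).le]
  · rw [hasDerivAt_iff_isLittleO_nhds_zero]
    simp only [zero_add, max_self, ne_eq, OfNat.ofNat_ne_zero, not_false_eq_true, zero_pow,
      sub_zero, mul_zero, smul_zero]
    refine IsBigO.trans_isLittleO ?_ (isLittleO_pow_id (by norm_num : 1 < 3))
    refine IsBigO.of_bound 1 (Eventually.of_forall fun v => ?_)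
    rw [one_mul, norm_pow, norm_pow]
    exact pow_le_pow_left₀ (norm_nonneg _) (by rcases le_total v 0 with h | h <;> simp [h]) 3
  · rw [max_eq_left hu.le]
    refine (hasDerivAt_pow 3 u).congr_of_eventuallyEq ?_ |>.congr_deriv (by norm_num)
    filter_upwards [Ioi_mem_nhds hu] with v hv
    rw [max_eq_left (mem_Ioi.mp hv).le]

lemma hasDerivAt_max_sub_pow_three (C t : ℝ) :
    HasDerivAt (fun s : ℝ => max (C - s) 0 ^ 3) (-(3 * max (C - t) 0 ^ 2)) t := by
  simpa [Function.comp_def] using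
    (hasDerivAt_max_zero_pow_three (C - t)).comp t ((hasDerivAt_id t).const_sub C)

lemma norm_mul_max_sub_sq_le {n : ℕ} {w s : ℝ} (hw : 0 ≤ w) (hs : -1 < s) :
    ‖w * max ((n : ℝ) + 1 - s) 0 ^ 2‖ ≤ 4 * (w * ((n : ℝ) + 1) ^ 3) := by
  have hM : max ((n : ℝ) + 1 - s) 0 ≤ 2 * ((n : ℝ) + 1) := by
    have := n.cast_nonneg (α := ℝ)
    exact max_le (by linarith) (by linarith)
  have hn : (1 : ℝ) ≤ (n : ℝ) + 1 := by simp
  rw [Real.norm_of_nonneg (by positivity)]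
  calc w * max ((n : ℝ) + 1 - s) 0 ^ 2 ≤ w * (2 * ((n : ℝ) + 1)) ^ 2 := by gcongr
    _ = 4 * (w * ((n : ℝ) + 1) ^ 2) := by ring
    _ ≤ 4 * (w * ((n : ℝ) + 1) ^ 3) := by gcongr; norm_num

theorem hasDerivAt_tsum_mul_max_sub_pow_three {w : ℕ → ℝ} (hw : ∀ n, 0 ≤ w n)
    (hsum : Summable fun n => w n * ((n : ℝ) + 1) ^ 3) {t : ℝ} (ht : -1 < t) :
    HasDerivAt (fun s => ∑' n, w n * max ((n : ℝ) + 1 - s) 0 ^ 3)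
      (-(3 * ∑' n, w n * max ((n : ℝ) + 1 - t) 0 ^ 2)) t := by
  refine (hasDerivAt_tsum_of_isPreconnected (hsum.mul_left 12) isOpen_Ioi
    (convex_Ioi (-1 : ℝ)).isPreconnected
    (g := fun n s => w n * max ((n : ℝ) + 1 - s) 0 ^ 3)
    (g' := fun n s => -(3 * (w n * max ((n : ℝ) + 1 - s) 0 ^ 2)))
    (fun n s _ => ?_) (fun n s hs => ?_) (mem_Ioi.2 neg_one_lt_zero) ?_ ht).congr_deriv ?_
  · simpa [mul_left_comm] using (hasDerivAt_max_sub_pow_three _ s).const_mul (w n)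
  · rw [norm_neg, norm_mul, Real.norm_of_nonneg zero_le_three]
    linarith [norm_mul_max_sub_sq_le (n := n) (hw n) hs]
  · simpa [max_eq_left (Nat.cast_add_one_pos _).le] using hsum
  · rw [tsum_neg, tsum_mul_left]

lemma Summable.tsum_pos_of_tsum_pos {ι : Type*} {f g : ι → ℝ} (hg : Summable g)
    (hg0 : ∀ i, 0 ≤ g i) (hfg : ∀ i, 0 < f i → 0 < g i) (hf : 0 < ∑' i, f i) : 0 < ∑' i, g i := by
  obtain ⟨i, hi⟩ : ∃ i, 0 < f i := by
    by_contra! h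
    exact (tsum_nonpos h).not_gt hf
  exact hg.tsum_pos hg0 i (hfg i hi)

lemma tsum_mul_max_sub_sq_pos {w : ℕ → ℝ} (hw : ∀ n, 0 ≤ w n)
    (hsum : Summable fun n => w n * ((n : ℝ) + 1) ^ 3) {t : ℝ} (ht : -1 < t)
    (hpos : 0 < ∑' n, w n * max ((n : ℝ) + 1 - t) 0 ^ 3) :
    0 < ∑' n, w n * max ((n : ℝ) + 1 - t) 0 ^ 2 := by
  refine Summable.tsum_pos_of_tsum_pos
    ((hsum.mul_left 4).of_norm_bounded fun n => norm_mul_max_sub_sq_le (hw n) ht)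
    (fun n => mul_nonneg (hw n) (by positivity)) (fun n hn => ?_) hpos
  rw [pow_succ, ← mul_assoc] at hn
  exact pos_of_mul_pos_left hn (le_max_right _ _)

lemma sub_le_of_isGreatest_inter_Iic {S : Set ℝ} {p q x a : ℝ} (hpq : p ≤ q)
    (hS : (Ioo p q)ᶜ ⊆ S) (ha : IsGreatest (S ∩ Iic x) a) : x - (q - p) ≤ a := by
  by_cases hx : x ∈ Ioo p q
  · linarith [hx.2, ha.2 ⟨hS fun h => h.1.false, hx.1.le⟩]
  · linarith [ha.2 ⟨hS hx, le_refl x⟩]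

lemma le_add_of_isLeast_inter_Ici {S : Set ℝ} {p q x b : ℝ} (hpq : p ≤ q)
    (hS : (Ioo p q)ᶜ ⊆ S) (hb : IsLeast (S ∩ Ici x) b) : b ≤ x + (q - p) := by
  by_cases hx : x ∈ Ioo p q
  · linarith [hx.1, hb.2 ⟨hS fun h => h.2.false, hx.2.le⟩]
  · linarith [hb.2 ⟨hS hx, le_refl x⟩]

lemma sub_pow_three_mul_sub_pow_three_le {S : Set ℝ} {p q x a b : ℝ} (hpq : p ≤ q)
    (hS : (Ioo p q)ᶜ ⊆ S) (ha : IsGreatest (S ∩ Iic x) a) (hb : IsLeast (S ∩ Ici x) b) :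
    (x - a) ^ 3 * (b - x) ^ 3 ≤ (q - p) ^ 6 := by
  have hxa : 0 ≤ x - a := sub_nonneg.2 ha.1.2
  have hbx : 0 ≤ b - x := sub_nonneg.2 hb.1.2
  calc (x - a) ^ 3 * (b - x) ^ 3 ≤ (q - p) ^ 3 * (q - p) ^ 3 := by
        gcongr ?_ ^ 3 * ?_ ^ 3
        · linarith [sub_le_of_isGreatest_inter_Iic hpq hS ha]
        · linarith [le_add_of_isLeast_inter_Ici hpq hS hb]
    _ = (q - p) ^ 6 := by ring

theorem stmt_13_general
    (E : ℕ → Set ℝ)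
    (hEbig : ∀ n, (Set.Ioo (-1 : ℝ) 2)ᶜ ⊆ E n)
    (a b : ℕ → ℝ → ℝ)
    (ha : ∀ n x, IsGreatest (E n ∩ Set.Iic x) (a n x))
    (hb : ∀ n x, IsLeast (E n ∩ Set.Ici x) (b n x))
    (c : ℕ → ℝ) (hc : ∀ n, 0 < c n)
    (hsummable : Summable fun n : ℕ => (81 ^ 2 / 6 : ℝ) * ((n : ℝ) + 1) ^ 3 * c n)
    (f : ℝ → ℝ → ℝ)
    (hf : ∀ x z, 0 ≤ z → f x z = x ^ 2 + ∑' n : ℕ,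
      c n * ((x - a n x) ^ 3 * (b n x - x) ^ 3) * max ((n : ℝ) + 1 - z) 0 ^ 3)
    : ∀ x z : ℝ, 0 ≤ z → x ^ 2 < f x z →
      ∃ d : ℝ, HasDerivWithinAt (fun t => f x t) d (Set.Ici 0) z ∧ d < 0 := by
  intro x z hz hfx
  set w : ℕ → ℝ := fun n => c n * ((x - a n x) ^ 3 * (b n x - x) ^ 3)
  have hw : ∀ n, 0 ≤ w n := fun n =>
    mul_nonneg (hc n).le (mul_nonneg (pow_nonneg (sub_nonneg.2 (ha n x).1.2) 3)
      (pow_nonneg (sub_nonneg.2 (hb n x).1.2) 3))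
  have hwsum : Summable fun n => w n * ((n : ℝ) + 1) ^ 3 := by
    refine hsummable.of_nonneg_of_le (fun n => mul_nonneg (hw n) (by positivity)) fun n => ?_
    have hgap := sub_pow_three_mul_sub_pow_three_le (by norm_num) (hEbig n) (ha n x) (hb n x)
    have hwn : w n ≤ 81 ^ 2 / 6 * c n := by
      rw [mul_comm (81 ^ 2 / 6)]
      exact mul_le_mul_of_nonneg_left (by linarith) (hc n).le
    calc w n * ((n : ℝ) + 1) ^ 3 ≤ 81 ^ 2 / 6 * c n * ((n : ℝ) + 1) ^ 3 := by gcongr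
      _ = 81 ^ 2 / 6 * ((n : ℝ) + 1) ^ 3 * c n := by ring
  have hz' : -1 < z := by linarith
  refine ⟨_, ((hasDerivAt_tsum_mul_max_sub_pow_three hw hwsum hz').const_add (x ^ 2)
    ).hasDerivWithinAt.congr (fun t ht => hf x t ht) (hf x z hz), ?_⟩
  have := tsum_mul_max_sub_sq_pos hw hwsum hz' (by linarith [hf x z hz])
  linarith

theorem stmt_13
    (E : ℕ → Set ℝ)
    (hEclosed : ∀ n, IsClosed (E n))
    (hEmono : ∀ n, E n ⊆ E (n + 1))
    (hEbig : ∀ n, (Set.Ioo (-1 : ℝ) 2)ᶜ ⊆ E n)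
    (a b : ℕ → ℝ → ℝ)
    (ha : ∀ n x, IsGreatest (E n ∩ Set.Iic x) (a n x))
    (hb : ∀ n x, IsLeast (E n ∩ Set.Ici x) (b n x))
    (c : ℕ → ℝ) (hc : ∀ n, 0 < c n)
    (hsummable : Summable fun n : ℕ => (81 ^ 2 / 6 : ℝ) * ((n : ℝ) + 1) ^ 3 * c n)
    (hsum : ∑' n : ℕ, (81 ^ 2 / 6 : ℝ) * ((n : ℝ) + 1) ^ 3 * c n < 1)
    (f : ℝ → ℝ → ℝ)
    (hf : ∀ x z, 0 ≤ z → f x z = x ^ 2 + ∑' n : ℕ,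
      c n * ((x - a n x) ^ 3 * (b n x - x) ^ 3) * max ((n : ℝ) + 1 - z) 0 ^ 3)
    : ∀ x z : ℝ, 0 ≤ z → x ^ 2 < f x z →
      ∃ d : ℝ, HasDerivWithinAt (fun t => f x t) d (Set.Ici 0) z ∧ d < 0 :=
  stmt_13_general E hEbig a b ha hb c hc hsummable f hf
end

section
/- Let H be a real Hilbert space and let A_1, A_2 be nonempty, convex, closed subsets of H. Then the set {α ∈ [0,1] : P_{A_2}^α ∘ P_{A_1}^α has a fixed point} equals either {0} or [0,1]. -/
/-!
For `0 < α < 2` and `s = 1 / (2 - α)`, a point `x` is fixed by `P₂^α ∘ P₁^α` exactly when,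
with `a = P₁ x` and `b = P₂ (P₁^α x)`, one has `x = a + s (b - a)` and `P₁^α x = b + s (a - b)`.
A metric projection onto a convex set is constant along each ray from `P z` through `z`, so
such an `x` exists iff some pair satisfies `P₁ b = a` and `P₂ a = b` (a pair realizing the
distance between `A₁` and `A₂`), a condition that does not involve `α`. Since `α = 0` always
gives a fixed point, the set of admissible `α` is `[0, 1]` or `{0}`.
-/

open InnerProductSpace

section Relax

variable {H : Type*} [AddCommGroup H] [Module ℝ H] {P : H → H} {α s : ℝ} {a b x y : H}

theorem relax_apply_add_smul_sub (hs : (2 - α) * s = 1) (hPa : P (a + s • (b - a)) = a) :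
    relax α P (a + s • (b - a)) = b + s • (a - b) := by
  rw [relax, hPa]
  linear_combination (norm := module) hs • (b - a)

theorem eq_add_smul_sub_of_relax (hα : α ≠ 0) (hs : (2 - α) * s = 1)
    (hy : y = α • a + (1 - α) • x) (hx : x = α • b + (1 - α) • y) :
    x = a + s • (b - a) := by
  have h : (2 - α) • x = (1 - α) • a + b := smul_right_injective H hα <| by
    linear_combination (norm := module) hx + (1 - α) • hy
  linear_combination (norm := module) s • h - hs • (x - a)

end Relax

theorem Convex.inner_sub_nonpos_of_forall_norm_le {H : Type*} [NormedAddCommGroup H]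
    [InnerProductSpace ℝ H] {A : Set H} (hA : Convex ℝ A) {x a : H} (ha : a ∈ A)
    (hmin : ∀ z ∈ A, ‖x - a‖ ≤ ‖x - z‖) {z : H} (hz : z ∈ A) : ⟪x - a, z - a⟫_ℝ ≤ 0 := by
  have : Nonempty A := ⟨⟨a, ha⟩⟩
  have hbdd : BddBelow (Set.range fun w : A => ‖x - w‖) := ⟨0, by rintro _ ⟨w, rfl⟩; positivity⟩
  have hinf : ‖x - a‖ = ⨅ w : A, ‖x - w‖ :=
    le_antisymm (le_ciInf fun w => hmin w w.2) (ciInf_le hbdd ⟨a, ha⟩)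
  exact (norm_eq_iInf_iff_real_inner_le_zero hA ha).1 hinf z hz

namespace IsMetricProj

variable {H : Type*} [NormedAddCommGroup H] [InnerProductSpace ℝ H] {A : Set H} {P : H → H}

theorem inner_sub_apply_nonpos (hP : IsMetricProj A P) (hA : Convex ℝ A) (x : H) {z : H}
    (hz : z ∈ A) : ⟪x - P x, z - P x⟫_ℝ ≤ 0 :=
  hA.inner_sub_nonpos_of_forall_norm_le (hP x).1
    (fun w hw => by simpa only [dist_eq_norm] using (hP x).2 w hw) hz

theorem apply_eq_iff (hP : IsMetricProj A P) (hA : Convex ℝ A) {x a : H} :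
    P x = a ↔ a ∈ A ∧ ∀ z ∈ A, ⟪x - a, z - a⟫_ℝ ≤ 0 := by
  refine ⟨?_, fun ⟨ha, hvar⟩ => ?_⟩
  · rintro rfl
    exact ⟨(hP x).1, fun z hz => hP.inner_sub_apply_nonpos hA x hz⟩
  have hsum : ‖P x - a‖ ^ 2 = ⟪x - a, P x - a⟫_ℝ + ⟪x - P x, a - P x⟫_ℝ := by
    rw [show a - P x = -(P x - a) by abel, inner_neg_right, ← sub_eq_add_neg, ← inner_sub_left,
      sub_sub_sub_cancel_left, real_inner_self_eq_norm_sq]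
  have hnonpos : ‖P x - a‖ ^ 2 ≤ 0 :=
    hsum ▸ add_nonpos (hvar _ (hP x).1) (hP.inner_sub_apply_nonpos hA x ha)
  exact norm_sub_eq_zero_iff.1 (pow_eq_zero_iff two_ne_zero |>.1 (hnonpos.antisymm (sq_nonneg _)))

theorem apply_add_smul_sub_eq_iff (hP : IsMetricProj A P) (hA : Convex ℝ A) {a b : H} {s : ℝ}
    (hs : 0 < s) : P (a + s • (b - a)) = a ↔ P b = a := by
  simp only [hP.apply_eq_iff hA, add_sub_cancel_left, real_inner_smul_left, ← smul_eq_mul,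
    smul_nonpos_iff_nonpos_of_pos_left hs]

end IsMetricProj

theorem exists_relax_comp_relax_fixed_iff {H : Type*} [NormedAddCommGroup H]
    [InnerProductSpace ℝ H] {A₁ A₂ : Set H} {P₁ P₂ : H → H} (hP₁ : IsMetricProj A₁ P₁)
    (hA₁ : Convex ℝ A₁) (hP₂ : IsMetricProj A₂ P₂) (hA₂ : Convex ℝ A₂) {α : ℝ} (hα₀ : 0 < α)
    (hα₂ : α < 2) : (∃ x, relax α P₂ (relax α P₁ x) = x) ↔ ∃ a b, P₁ b = a ∧ P₂ a = b := by
  set s := (2 - α)⁻¹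
  have hs : (2 - α) * s = 1 := mul_inv_cancel₀ (by linarith)
  have hs₀ : 0 < s := inv_pos.2 (by linarith)
  constructor
  · rintro ⟨x, hx⟩
    have hx_ray : x = P₁ x + s • (P₂ (relax α P₁ x) - P₁ x) :=
      eq_add_smul_sub_of_relax hα₀.ne' hs rfl hx.symm
    have hy_ray : relax α P₁ x = P₂ (relax α P₁ x) + s • (P₁ x - P₂ (relax α P₁ x)) :=
      eq_add_smul_sub_of_relax hα₀.ne' hs hx.symm rfl
    refine ⟨P₁ x, P₂ (relax α P₁ x), ?_, ?_⟩
    · rw [← hP₁.apply_add_smul_sub_eq_iff hA₁ hs₀, ← hx_ray]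
    · rw [← hP₂.apply_add_smul_sub_eq_iff hA₂ hs₀, ← hy_ray]
  · rintro ⟨a, b, hPb, hPa⟩
    have hx : P₁ (a + s • (b - a)) = a := (hP₁.apply_add_smul_sub_eq_iff hA₁ hs₀).2 hPb
    have hy : P₂ (b + s • (a - b)) = b := (hP₂.apply_add_smul_sub_eq_iff hA₂ hs₀).2 hPa
    exact ⟨a + s • (b - a), by
      rw [relax_apply_add_smul_sub hs hx, relax_apply_add_smul_sub hs hy]⟩

theorem stmt_15_general {H : Type*} [NormedAddCommGroup H] [InnerProductSpace ℝ H]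
    (A₁ A₂ : Set H)
    (hA₁ : A₁.Nonempty ∧ Convex ℝ A₁ ∧ IsClosed A₁)
    (hA₂ : A₂.Nonempty ∧ Convex ℝ A₂ ∧ IsClosed A₂)
    (P₁ P₂ : H → H) (hP₁ : IsMetricProj A₁ P₁) (hP₂ : IsMetricProj A₂ P₂) :
    {α : ℝ | α ∈ Set.Icc (0 : ℝ) 1 ∧ ∃ x, relax α P₂ (relax α P₁ x) = x} = {(0 : ℝ)} ∨
    {α : ℝ | α ∈ Set.Icc (0 : ℝ) 1 ∧ ∃ x, relax α P₂ (relax α P₁ x) = x} = Set.Icc 0 1 := by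
  have fixed_iff {α : ℝ} (hα₀ : 0 < α) (hα₁ : α ≤ 1) :=
    exists_relax_comp_relax_fixed_iff hP₁ hA₁.2.1 hP₂ hA₂.2.1 hα₀ (by linarith)
  have fixed_zero : ∃ x : H, relax 0 P₂ (relax 0 P₁ x) = x := ⟨0, by simp [relax]⟩
  by_cases hpair : ∃ a b, P₁ b = a ∧ P₂ a = b
  · refine .inr <| Set.ext fun α => ⟨And.left, fun hα => ⟨hα, ?_⟩⟩
    rcases hα.1.eq_or_lt with rfl | hα₀
    · exact fixed_zero
    · exact (fixed_iff hα₀ hα.2).2 hpair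
  · refine .inl <| Set.ext fun α => ⟨fun ⟨hα, hfix⟩ => ?_, ?_⟩
    · by_contra hα₀
      exact hpair ((fixed_iff (hα.1.lt_of_ne' hα₀) hα.2).1 hfix)
    · rintro rfl
      exact ⟨Set.left_mem_Icc.2 zero_le_one, fixed_zero⟩

theorem stmt_15 {H : Type*} [NormedAddCommGroup H] [InnerProductSpace ℝ H] [CompleteSpace H]
    (A₁ A₂ : Set H)
    (hA₁ : A₁.Nonempty ∧ Convex ℝ A₁ ∧ IsClosed A₁)
    (hA₂ : A₂.Nonempty ∧ Convex ℝ A₂ ∧ IsClosed A₂)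
    (P₁ P₂ : H → H) (hP₁ : IsMetricProj A₁ P₁) (hP₂ : IsMetricProj A₂ P₂) :
    {α : ℝ | α ∈ Set.Icc (0 : ℝ) 1 ∧ ∃ x, relax α P₂ (relax α P₁ x) = x} = {(0 : ℝ)} ∨
    {α : ℝ | α ∈ Set.Icc (0 : ℝ) 1 ∧ ∃ x, relax α P₂ (relax α P₁ x) = x} = Set.Icc 0 1 :=
  stmt_15_general A₁ A₂ hA₁ hA₂ P₁ P₂ hP₁ hP₂
end

section
/- Let k ≥ 1 be an integer and let A_1, …, A_k be nonempty, convex, closed subsets of ℝ. Then for every α ∈ [0,1] the composition P_{A_k}^α ∘ P_{A_{k−1}}^α ∘ ⋯ ∘ P_{A_1}^α : ℝ → ℝ has a fixed point; that is, {α ∈ [0,1] : the composition has a fixed point} = [0,1]. -/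
/-
Metric projections onto subsets of ℝ are monotone, and a projection onto a convex set `A` moves
each point towards every point of `A`. Hence all the relaxed projections, and so their composition,
are monotone self-maps of any interval `[m, M]` meeting every `A i`; by Knaster–Tarski on the
complete lattice `[m, M]` the composition has a fixed point.
-/

open Set

namespace IsMetricProj

variable {A : Set ℝ} {P : ℝ → ℝ}

theorem monotone (hP : IsMetricProj A P) : Monotone P := by
  intro x y hxy
  have hx := (hP x).2 (P y) (hP y).1
  have hy := (hP y).2 (P x) (hP x).1
  rw [Real.dist_eq, Real.dist_eq, ← sq_le_sq] at hx hy
  rcases hxy.eq_or_lt with rfl | hlt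
  · rfl
  -- summing `hx` and `hy` gives `(y - x) * (P x - P y) ≤ 0`
  by_contra! h
  nlinarith [mul_pos (sub_pos.2 hlt) (sub_pos.2 h)]

theorem mem_uIcc (hP : IsMetricProj A P) (hA : Convex ℝ A) {x a : ℝ} (ha : a ∈ A) :
    P x ∈ uIcc x a := by
  have hPx := (hP x).1
  have hnear := (hP x).2
  change min x a ≤ P x ∧ P x ≤ max x a
  constructor
  · by_contra! h
    have hz : min x a ∈ A := hA.ordConnected.out hPx ha ⟨h.le, min_le_right x a⟩
    have := hnear _ hz
    rw [Real.dist_eq, Real.dist_eq, abs_of_nonneg (sub_nonneg.2 (min_le_left x a)),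
      abs_of_pos (by linarith [min_le_left x a])] at this
    linarith
  · by_contra! h
    have hz : max x a ∈ A := hA.ordConnected.out ha hPx ⟨le_max_right x a, h.le⟩
    have := hnear _ hz
    rw [Real.dist_eq, Real.dist_eq, abs_of_nonpos (sub_nonpos.2 (le_max_left x a)),
      abs_of_neg (by linarith [le_max_left x a])] at this
    linarith

theorem mapsTo_of_ordConnected (hP : IsMetricProj A P) (hA : Convex ℝ A) {s : Set ℝ}
    [hs : OrdConnected s] {a : ℝ} (ha : a ∈ A) (has : a ∈ s) : MapsTo P s s :=
  fun _ hx => hs.uIcc_subset hx has (hP.mem_uIcc hA ha)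

end IsMetricProj

section relax

variable {H : Type*} [AddCommGroup H] [Module ℝ H] {α : ℝ} {P : H → H}

theorem Set.MapsTo.relax {s : Set H} (hs : Convex ℝ s) (hP : MapsTo P s s)
    (hα : α ∈ Icc (0 : ℝ) 1) : MapsTo (relax α P) s s :=
  fun _ hx => hs (hP hx) hx hα.1 (sub_nonneg.2 hα.2) (add_sub_cancel α 1)

theorem Monotone.relax [PartialOrder H] [IsOrderedAddMonoid H] [PosSMulMono ℝ H]
    (hP : Monotone P) (hα : α ∈ Icc (0 : ℝ) 1) : Monotone (relax α P) :=
  (hP.const_smul hα.1).add (monotone_id.const_smul (sub_nonneg.2 hα.2))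

end relax

theorem compFold_induction {H : Type*} {k : ℕ} {T : Fin k → H → H} (p : (H → H) → Prop)
    (hid : p id) (hcomp : ∀ i g, p g → p (T i ∘ g)) : p (compFold T) := by
  suffices ∀ l : List (H → H), (∀ f ∈ l, ∃ i, T i = f) →
      ∀ g, p g → p (l.foldl (fun g f => f ∘ g) g) from
    this _ (fun _ hf => List.mem_ofFn.mp hf) id hid
  intro l hl
  induction l with
  | nil => exact fun _ hg => hg
  | cons f l ih =>
    intro g hg
    obtain ⟨i, rfl⟩ := hl f List.mem_cons_self
    exact ih (fun f' hf' => hl f' (List.mem_cons_of_mem _ hf')) _ (hcomp i g hg)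

theorem Monotone.exists_fixedPoint_of_mapsTo_Icc {β : Type*} [ConditionallyCompleteLattice β]
    {f : β → β} (hf : Monotone f) {m M : β} (hmM : m ≤ M)
    (hmaps : MapsTo f (Icc m M) (Icc m M)) :
    ∃ x, f x = x := by
  have : Fact (m ≤ M) := ⟨hmM⟩
  let g : Icc m M →o Icc m M := ⟨hmaps.restrict f _ _, fun _ _ hxy => hf hxy⟩
  exact ⟨g.lfp, congrArg Subtype.val g.map_lfp⟩

theorem stmt_16_general (k : ℕ) (A : Fin k → Set ℝ)
    (hA : ∀ i, (A i).Nonempty ∧ Convex ℝ (A i) ∧ IsClosed (A i))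
    (P : Fin k → ℝ → ℝ) (hP : ∀ i, IsMetricProj (A i) (P i)) :
    ∀ α ∈ Set.Icc (0 : ℝ) 1, ∃ x : ℝ, compFold (fun i => relax α (P i)) x = x := by
  intro α hα
  choose a ha using fun i => (hA i).1
  set R := ∑ i, |a i|
  have hR : ∀ i, a i ∈ Icc (-R) R := fun i =>
    abs_le.mp (Finset.single_le_sum (fun j _ => abs_nonneg (a j)) (Finset.mem_univ i))
  refine Monotone.exists_fixedPoint_of_mapsTo_Icc (m := -R) (M := R) ?_
    (neg_le_self (Finset.sum_nonneg fun i _ => abs_nonneg (a i))) ?_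
  · exact compFold_induction Monotone monotone_id
      fun i _ hg => ((hP i).monotone.relax hα).comp hg
  · exact compFold_induction (fun g => MapsTo g (Icc (-R) R) (Icc (-R) R)) (mapsTo_id _)
      fun i _ hg => (((hP i).mapsTo_of_ordConnected (hA i).2.1 (ha i) (hR i)).relax
        (convex_Icc _ _) hα).comp hg

theorem stmt_16 (k : ℕ) (hk : 1 ≤ k) (A : Fin k → Set ℝ)
    (hA : ∀ i, (A i).Nonempty ∧ Convex ℝ (A i) ∧ IsClosed (A i))
    (P : Fin k → ℝ → ℝ) (hP : ∀ i, IsMetricProj (A i) (P i)) :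
    ∀ α ∈ Set.Icc (0 : ℝ) 1, ∃ x : ℝ, compFold (fun i => relax α (P i)) x = x :=
  stmt_16_general k A hA P hP
end
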